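/- arXiv:2308.01579 — 11 statements merged into one kernel-verified Lean document; each statement's English description precedes it below -/
import Mathlib

section
/- With Λ even self-dual with respect to ⊘, χ ∈ Λ, δ = χ/2 ∉ Λ, δ ⊘ δ ∈ ℤ, the dual of the subgroup Λ₀ with respect to ⊘ equals the union Λ₀* = Λ₀ ∪ Λ₁ ∪ Λ₂ ∪ Λ₃. -/
noncomputable section

/-- The dual of a subset of `ℝ^N` with respect to the bilinear form `g`. -/
def dualSet {N : ℕ} (g : LinearMap.BilinForm ℝ (Fin N → ℝ)) (L : Set (Fin N → ℝ)) :
    Set (Fin N → ℝ) :=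
  {x | ∀ l ∈ L, ∃ k : ℤ, g x l = (k : ℝ)}

/-- `Λ₀ = {λ ∈ Λ : χ ⊘ λ ∈ 2ℤ}`. -/
def lambda0 {N : ℕ} (g : LinearMap.BilinForm ℝ (Fin N → ℝ)) (Λ : AddSubgroup (Fin N → ℝ))
    (χ : Fin N → ℝ) : Set (Fin N → ℝ) :=
  {l | l ∈ Λ ∧ ∃ k : ℤ, g χ l = 2 * (k : ℝ)}

/-- `Λ₁ = {λ ∈ Λ : χ ⊘ λ ∈ 2ℤ + 1}`. -/
def lambda1 {N : ℕ} (g : LinearMap.BilinForm ℝ (Fin N → ℝ)) (Λ : AddSubgroup (Fin N → ℝ))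
    (χ : Fin N → ℝ) : Set (Fin N → ℝ) :=
  {l | l ∈ Λ ∧ ∃ k : ℤ, g χ l = 2 * (k : ℝ) + 1}

/-- The shift `L + v` of a subset `L ⊆ ℝ^N` by the vector `v`. -/
def shiftSet {N : ℕ} (L : Set (Fin N → ℝ)) (v : Fin N → ℝ) : Set (Fin N → ℝ) :=
  (· + v) '' L

/-- With `Λ` even self-dual with respect to `⊘`, `χ ∈ Λ`, `δ = χ/2 ∉ Λ`, `δ ⊘ δ ∈ ℤ`,
the dual of the subgroup `Λ₀` with respect to `⊘` equals the union
`Λ₀* = Λ₀ ∪ Λ₁ ∪ Λ₂ ∪ Λ₃`. -/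
theorem statement1 {N : ℕ} (hN : 1 ≤ N)
    (g : LinearMap.BilinForm ℝ (Fin N → ℝ))
    (hsymm : ∀ x y, g x y = g y x)
    (hnondeg : ∀ x, (∀ y, g x y = 0) → x = 0)
    (Λ : AddSubgroup (Fin N → ℝ))
    (heven : ∀ l ∈ Λ, ∃ k : ℤ, g l l = 2 * (k : ℝ))
    (hselfdual : (Λ : Set (Fin N → ℝ)) = dualSet g (Λ : Set (Fin N → ℝ)))
    (χ : Fin N → ℝ) (hχ : χ ∈ Λ)
    (δ : Fin N → ℝ) (hδdef : δ = (2 : ℝ)⁻¹ • χ)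
    (hδnot : δ ∉ Λ)
    (hδint : ∃ k : ℤ, g δ δ = (k : ℝ))
    (Λ₂ Λ₃ : Set (Fin N → ℝ))
    (hcase0 : (∃ k : ℤ, g δ δ = 2 * (k : ℝ)) →
      Λ₂ = shiftSet (lambda1 g Λ χ) δ ∧ Λ₃ = shiftSet (lambda0 g Λ χ) δ)
    (hcase1 : (∃ k : ℤ, g δ δ = 2 * (k : ℝ) + 1) →
      Λ₂ = shiftSet (lambda0 g Λ χ) δ ∧ Λ₃ = shiftSet (lambda1 g Λ χ) δ) :
    dualSet g (lambda0 g Λ χ) = lambda0 g Λ χ ∪ lambda1 g Λ χ ∪ Λ₂ ∪ Λ₃ := by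
  -- Basic facts
  have hmemdual : ∀ x, x ∈ Λ ↔ ∀ l ∈ Λ, ∃ k : ℤ, g x l = (k : ℝ) := by
    intro x
    constructor
    · intro hx l hl
      have hx' : x ∈ dualSet g (Λ : Set (Fin N → ℝ)) := hselfdual ▸ hx
      exact hx' l hl
    · intro hx
      have hx' : x ∈ dualSet g (Λ : Set (Fin N → ℝ)) := hx
      rw [← hselfdual] at hx'
      exact hx'
  have hδg : ∀ l, g δ l = g χ l / 2 := by
    intro l
    rw [hδdef]
    simp [smul_eq_mul]
    ring
  have hχint : ∀ l ∈ Λ, ∃ k : ℤ, g χ l = (k : ℝ) := (hmemdual χ).1 hχ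
  have hsplit : ∀ l ∈ Λ, (∃ k : ℤ, g χ l = 2 * (k : ℝ)) ∨ (∃ k : ℤ, g χ l = 2 * (k : ℝ) + 1) := by
    intro l hl
    obtain ⟨k, hk⟩ := hχint l hl
    rcases Int.even_or_odd k with ⟨t, ht⟩ | ⟨t, ht⟩
    · exact Or.inl ⟨t, by rw [hk, ht]; push_cast; ring⟩
    · exact Or.inr ⟨t, by rw [hk, ht]; push_cast; ring⟩
  -- Λ₁ is nonempty
  have hμ : ∃ μ ∈ Λ, ∃ k : ℤ, g χ μ = 2 * (k : ℝ) + 1 := by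
    by_contra hcon
    push_neg at hcon
    apply hδnot
    rw [hmemdual]
    intro l hl
    rcases hsplit l hl with ⟨j, hj⟩ | ⟨j, hj⟩
    · exact ⟨j, by rw [hδg, hj]; ring⟩
    · exact absurd hj (hcon l hl j)
  obtain ⟨μ, hμΛ, a, ha⟩ := hμ
  -- Λ₂ ∪ Λ₃ = (Λ₀ + δ) ∪ (Λ₁ + δ)
  have h23 : Λ₂ ∪ Λ₃ = shiftSet (lambda0 g Λ χ) δ ∪ shiftSet (lambda1 g Λ χ) δ := by
    obtain ⟨d, hd⟩ := hδint
    rcases Int.even_or_odd d with ⟨t, ht⟩ | ⟨t, ht⟩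
    · obtain ⟨h2, h3⟩ := hcase0 ⟨t, by rw [hd, ht]; push_cast; ring⟩
      rw [h2, h3, Set.union_comm]
    · obtain ⟨h2, h3⟩ := hcase1 ⟨t, by rw [hd, ht]; push_cast; ring⟩
      rw [h2, h3]
  -- elements of Λ are in the dual of Λ₀
  have hΛsub : ∀ x ∈ Λ, x ∈ dualSet g (lambda0 g Λ χ) := by
    intro x hx l hl
    exact (hmemdual x).1 hx l hl.1
  -- shifts of Λ by δ are in the dual of Λ₀
  have hshift : ∀ y ∈ Λ, (y + δ) ∈ dualSet g (lambda0 g Λ χ) := by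
    intro y hy l hl
    obtain ⟨hlΛ, j, hj⟩ := hl
    obtain ⟨n, hn⟩ := (hmemdual y).1 hy l hlΛ
    refine ⟨n + j, ?_⟩
    have : g (y + δ) l = g y l + g δ l := by simp [map_add]
    rw [this, hn, hδg, hj]
    push_cast
    ring
  ext x
  constructor
  · intro hx
    -- x pairs half-integrally with μ
    have h2μ : (μ + μ) ∈ lambda0 g Λ χ := by
      refine ⟨Λ.add_mem hμΛ hμΛ, ⟨2 * a + 1, ?_⟩⟩
      have : g χ (μ + μ) = g χ μ + g χ μ := by simp [map_add]
      rw [this, ha]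
      push_cast
      ring
    obtain ⟨m, hm⟩ := hx (μ + μ) h2μ
    have hm' : g x μ + g x μ = (m : ℝ) := by
      have : g x (μ + μ) = g x μ + g x μ := by simp [map_add]
      rw [← this, hm]
    rcases Int.even_or_odd m with ⟨t, ht⟩ | ⟨t, ht⟩
    · -- g x μ ∈ ℤ, so x ∈ Λ
      have hxμ : g x μ = (t : ℝ) := by
        have : (m : ℝ) = (t : ℝ) + (t : ℝ) := by rw [ht]; push_cast; ring
        linarith [hm', this]
      have hxΛ : x ∈ Λ := by
        rw [hmemdual]
        intro l hl
        rcases hsplit l hl with ⟨j, hj⟩ | ⟨j, hj⟩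
        · exact hx l ⟨hl, j, hj⟩
        · have hlm : l - μ ∈ lambda0 g Λ χ := by
            refine ⟨Λ.sub_mem hl hμΛ, ⟨j - a, ?_⟩⟩
            have : g χ (l - μ) = g χ l - g χ μ := by simp [map_sub]
            rw [this, hj, ha]
            push_cast
            ring
          obtain ⟨n, hn⟩ := hx _ hlm
          have hsub : g x (l - μ) = g x l - g x μ := by simp [map_sub]
          refine ⟨n + t, ?_⟩
          rw [hsub] at hn
          push_cast
          linarith [hn, hxμ]
      obtain ⟨p, hp⟩ := hχint x hxΛ
      rcases Int.even_or_odd p with ⟨q, hq⟩ | ⟨q, hq⟩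
      · exact Or.inl (Or.inl (Or.inl ⟨hxΛ, ⟨q, by rw [hp, hq]; push_cast; ring⟩⟩))
      · exact Or.inl (Or.inl (Or.inr ⟨hxΛ, ⟨q, by rw [hp, hq]; push_cast; ring⟩⟩))
    · -- g x μ ∈ ℤ + 1/2, so x - δ ∈ Λ
      have hxμ : g x μ = (t : ℝ) + 1 / 2 := by
        have : (m : ℝ) = 2 * (t : ℝ) + 1 := by rw [ht]; push_cast; ring
        linarith [hm', this]
      have hyΛ : x - δ ∈ Λ := by
        rw [hmemdual]
        intro l hl
        have hsub : g (x - δ) l = g x l - g δ l := by simp [map_sub]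
        rcases hsplit l hl with ⟨j, hj⟩ | ⟨j, hj⟩
        · obtain ⟨n, hn⟩ := hx l ⟨hl, j, hj⟩
          refine ⟨n - j, ?_⟩
          rw [hsub, hn, hδg, hj]
          push_cast
          ring
        · have hlm : l - μ ∈ lambda0 g Λ χ := by
            refine ⟨Λ.sub_mem hl hμΛ, ⟨j - a, ?_⟩⟩
            have : g χ (l - μ) = g χ l - g χ μ := by simp [map_sub]
            rw [this, hj, ha]
            push_cast
            ring
          obtain ⟨n, hn⟩ := hx _ hlm
          have hsub2 : g x (l - μ) = g x l - g x μ := by simp [map_sub]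
          rw [hsub2] at hn
          refine ⟨n + t - j, ?_⟩
          rw [hsub, hδg, hj]
          push_cast
          linarith [hn, hxμ]
      have hxeq : (x - δ) + δ = x := by abel
      obtain ⟨p, hp⟩ := hχint (x - δ) hyΛ
      have hmem23 : x ∈ Λ₂ ∪ Λ₃ := by
        rw [h23]
        rcases Int.even_or_odd p with ⟨q, hq⟩ | ⟨q, hq⟩
        · exact Or.inl ⟨x - δ, ⟨hyΛ, ⟨q, by rw [hp, hq]; push_cast; ring⟩⟩, hxeq⟩
        · exact Or.inr ⟨x - δ, ⟨hyΛ, ⟨q, by rw [hp, hq]; push_cast; ring⟩⟩, hxeq⟩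
      rcases hmem23 with h | h
      · exact Or.inl (Or.inr h)
      · exact Or.inr h
  · intro hx
    rcases hx with ((h | h) | h) | h
    · exact hΛsub x h.1
    · exact hΛsub x h.1
    · have : x ∈ shiftSet (lambda0 g Λ χ) δ ∪ shiftSet (lambda1 g Λ χ) δ := by
        rw [← h23]; exact Or.inl h
      rcases this with ⟨y, hy, rfl⟩ | ⟨y, hy, rfl⟩
      · exact hshift y hy.1
      · exact hshift y hy.1
    · have : x ∈ shiftSet (lambda0 g Λ χ) δ ∪ shiftSet (lambda1 g Λ χ) δ := by
        rw [← h23]; exact Or.inr h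
      rcases this with ⟨y, hy, rfl⟩ | ⟨y, hy, rfl⟩
      · exact hshift y hy.1
      · exact hshift y hy.1
end
end

section
/- With Λ even self-dual with respect to ⊘, χ ∈ Λ, δ = χ/2 ∉ Λ, δ ⊘ δ ∈ ℤ, the shifted lattice Λ_NS := Λ₀ ∪ Λ₂ is self-dual with respect to ⊘: Λ_NS* = Λ_NS. -/
noncomputable section

/-- The shifted lattice `Λ_NS := Λ₀ ∪ Λ₂` is self-dual with respect to `⊘`:
`Λ_NS* = Λ_NS`. -/
theorem statement2 {N : ℕ} (hN : 1 ≤ N)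
    (g : LinearMap.BilinForm ℝ (Fin N → ℝ))
    (hsymm : ∀ x y, g x y = g y x)
    (hnondeg : ∀ x, (∀ y, g x y = 0) → x = 0)
    (Λ : AddSubgroup (Fin N → ℝ))
    (heven : ∀ l ∈ Λ, ∃ k : ℤ, g l l = 2 * (k : ℝ))
    (hselfdual : (Λ : Set (Fin N → ℝ)) = dualSet g (Λ : Set (Fin N → ℝ)))
    (χ : Fin N → ℝ) (hχ : χ ∈ Λ)
    (δ : Fin N → ℝ) (hδdef : δ = (2 : ℝ)⁻¹ • χ)
    (hδnot : δ ∉ Λ)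
    (hδint : ∃ k : ℤ, g δ δ = (k : ℝ))
    (Λ₂ Λ₃ : Set (Fin N → ℝ))
    (hcase0 : (∃ k : ℤ, g δ δ = 2 * (k : ℝ)) →
      Λ₂ = shiftSet (lambda1 g Λ χ) δ ∧ Λ₃ = shiftSet (lambda0 g Λ χ) δ)
    (hcase1 : (∃ k : ℤ, g δ δ = 2 * (k : ℝ) + 1) →
      Λ₂ = shiftSet (lambda0 g Λ χ) δ ∧ Λ₃ = shiftSet (lambda1 g Λ χ) δ) :
    dualSet g (lambda0 g Λ χ ∪ Λ₂) = lambda0 g Λ χ ∪ Λ₂ := by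
  -- basic bilinearity facts
  have hgδ : ∀ l, g δ l = g χ l / 2 := by
    intro l
    rw [hδdef, map_smul, LinearMap.smul_apply, smul_eq_mul]
    ring
  have hgδ' : ∀ x, g x δ = g x χ / 2 := fun x => by
    rw [hsymm x δ, hgδ, hsymm]
  have hpair : ∀ l ∈ Λ, ∀ m ∈ Λ, ∃ k : ℤ, g l m = (k : ℝ) := by
    intro l hl m hm
    have h : l ∈ dualSet g (Λ : Set (Fin N → ℝ)) := by rw [← hselfdual]; exact hl
    exact h m hm
  have hmem : ∀ x : Fin N → ℝ, (∀ m ∈ Λ, ∃ k : ℤ, g x m = (k : ℝ)) → x ∈ Λ := by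
    intro x hx
    have h : x ∈ dualSet g (Λ : Set (Fin N → ℝ)) := fun m hm => hx m hm
    rwa [← hselfdual] at h
  obtain ⟨kδ, hkδ⟩ := hδint
  have hχχ : g χ χ = 4 * (kδ : ℝ) := by
    have h1 : g δ δ = g χ χ / 4 := by
      rw [hgδ δ, hgδ' χ]; ring
    rw [h1] at hkδ
    linarith
  have hkδ' : g δ δ = (kδ : ℝ) := by rw [hgδ δ, hgδ' χ, hχχ]; push_cast; ring
  have hχδ : g χ δ = 2 * (kδ : ℝ) := by rw [hgδ' χ, hχχ]; ring
  have hχ0 : χ ∈ lambda0 g Λ χ := ⟨hχ, 2 * kδ, by rw [hχχ]; push_cast; ring⟩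
  have h00 : (0 : Fin N → ℝ) ∈ lambda0 g Λ χ := ⟨Λ.zero_mem, 0, by simp⟩
  have hdich : ∀ l ∈ Λ, l ∈ lambda0 g Λ χ ∨ l ∈ lambda1 g Λ χ := by
    intro l hl
    obtain ⟨k, hk⟩ := hpair χ hχ l hl
    rcases Int.even_or_odd k with ⟨m, hm⟩ | ⟨m, hm⟩
    · exact Or.inl ⟨hl, m, by rw [hk, hm]; push_cast; ring⟩
    · exact Or.inr ⟨hl, m, by rw [hk, hm]; push_cast; ring⟩
  have hμex : ∃ μ, μ ∈ lambda1 g Λ χ := by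
    by_contra hc
    push_neg at hc
    refine hδnot (hmem δ (fun m hm => ?_))
    rcases hdich m hm with ⟨_, k, hk⟩ | h1
    · exact ⟨k, by rw [hgδ m, hk]; push_cast; ring⟩
    · exact absurd h1 (hc m)
  -- the forward direction, uniform in the shifting set S
  have forward : ∀ S : Set (Fin N → ℝ), (∀ m ∈ S, m ∈ Λ) →
      (∀ m ∈ S, ∀ n ∈ S, ∃ k : ℤ, g χ m / 2 + g χ n / 2 + (kδ : ℝ) = (k : ℝ)) →
      (lambda0 g Λ χ ∪ shiftSet S δ) ⊆ dualSet g (lambda0 g Λ χ ∪ shiftSet S δ) := by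
    intro S hSΛ hSS x hx l hl
    rcases hx with ⟨hxΛ, a, ha⟩ | ⟨m, hm, rfl⟩
    · rcases hl with ⟨hlΛ, c, hc⟩ | ⟨n, hn, rfl⟩
      · exact hpair x hxΛ l hlΛ
      · show ∃ k : ℤ, g x (n + δ) = (k : ℝ)
        obtain ⟨p, hp⟩ := hpair x hxΛ n (hSΛ n hn)
        refine ⟨p + a, ?_⟩
        rw [map_add, hp, hgδ' x, hsymm x χ, ha]
        push_cast; ring
    · show ∃ k : ℤ, g (m + δ) l = (k : ℝ)
      rcases hl with ⟨hlΛ, c, hc⟩ | ⟨n, hn, rfl⟩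
      · obtain ⟨p, hp⟩ := hpair m (hSΛ m hm) l hlΛ
        refine ⟨p + c, ?_⟩
        rw [map_add, LinearMap.add_apply, hp, hgδ l, hc]
        push_cast; ring
      · show ∃ k : ℤ, g (m + δ) (n + δ) = (k : ℝ)
        obtain ⟨p, hp⟩ := hpair m (hSΛ m hm) n (hSΛ n hn)
        obtain ⟨q, hq⟩ := hSS m hm n hn
        refine ⟨p + q, ?_⟩
        have h1 : g (m + δ) (n + δ) = g m n + g m δ + g δ n + g δ δ := by
          simp only [map_add, LinearMap.add_apply]
          ring
        rw [h1, hp, hgδ' m, hsymm m χ, hgδ n, hkδ']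
        push_cast
        linarith
  rcases Int.even_or_odd kδ with ⟨t, ht⟩ | ⟨t, ht⟩
  · -- g δ δ even : Λ₂ = Λ₁ + δ
    obtain ⟨hΛ₂, -⟩ := hcase0 ⟨t, by rw [hkδ', ht]; push_cast; ring⟩
    rw [hΛ₂]
    refine Set.Subset.antisymm ?_ (forward _ (fun m hm => hm.1) ?_)
    · -- dual ⊆ Λ_NS
      intro x hx
      have h0 : ∀ l ∈ lambda0 g Λ χ, ∃ k : ℤ, g x l = (k : ℝ) :=
        fun l hl => hx l (Or.inl hl)
      have h2 : ∀ m ∈ lambda1 g Λ χ, ∃ k : ℤ, g x (m + δ) = (k : ℝ) :=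
        fun m hm => hx _ (Or.inr ⟨m, hm, rfl⟩)
      obtain ⟨a, ha⟩ := h0 χ hχ0
      have hxδ : g x δ = (a : ℝ) / 2 := by rw [hgδ' x, ha]
      rcases Int.even_or_odd a with ⟨a', ha'⟩ | ⟨a', ha'⟩
      · -- a even : x ∈ Λ₀
        have har : (a : ℝ) = (a' : ℝ) + a' := by exact_mod_cast ha'
        have hxΛ : x ∈ Λ := by
          refine hmem x (fun m hm => ?_)
          rcases hdich m hm with h0' | h1'
          · exact h0 m h0'
          · obtain ⟨q, hq⟩ := h2 m h1'
            refine ⟨q - a', ?_⟩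
            have e1 : g x m + g x δ = (q : ℝ) := by rw [← map_add]; exact hq
            push_cast
            linarith
        exact Or.inl ⟨hxΛ, a', by rw [hsymm χ x, ha, har]; ring⟩
      · -- a odd : x - δ ∈ Λ₁, x ∈ Λ₂
        have har : (a : ℝ) = 2 * (a' : ℝ) + 1 := by exact_mod_cast ha'
        have hyΛ : x - δ ∈ Λ := by
          refine hmem _ (fun m hm => ?_)
          have e0 : g (x - δ) m = g x m - g δ m := by
            rw [map_sub, LinearMap.sub_apply]
          rcases hdich m hm with ⟨_, c, hc⟩ | h1'
          · obtain ⟨p, hp⟩ := h0 m ⟨hm, c, hc⟩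
            refine ⟨p - c, ?_⟩
            rw [e0, hp, hgδ m, hc]
            push_cast; ring
          · obtain ⟨q, hq⟩ := h2 m h1'
            obtain ⟨_, c, hc⟩ := h1'
            refine ⟨q - a' - c - 1, ?_⟩
            have e1 : g x m + g x δ = (q : ℝ) := by rw [← map_add]; exact hq
            rw [e0, hgδ m, hc]
            push_cast
            linarith
        have hy1 : x - δ ∈ lambda1 g Λ χ := by
          refine ⟨hyΛ, a' - kδ, ?_⟩
          rw [map_sub (g χ), hsymm χ x, ha, hχδ, har]
          push_cast; ring
        exact Or.inr ⟨x - δ, hy1, by show x - δ + δ = x; abel⟩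
    · -- forward hypothesis for S = Λ₁
      rintro m ⟨-, b, hb⟩ n ⟨-, c, hc⟩
      refine ⟨b + c + 1 + kδ, ?_⟩
      rw [hb, hc]
      push_cast; ring
  · -- g δ δ odd : Λ₂ = Λ₀ + δ
    obtain ⟨hΛ₂, -⟩ := hcase1 ⟨t, by rw [hkδ', ht]; push_cast; ring⟩
    rw [hΛ₂]
    refine Set.Subset.antisymm ?_ (forward _ (fun m hm => hm.1) ?_)
    · intro x hx
      have h0 : ∀ l ∈ lambda0 g Λ χ, ∃ k : ℤ, g x l = (k : ℝ) :=
        fun l hl => hx l (Or.inl hl)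
      have h2 : ∀ m ∈ lambda0 g Λ χ, ∃ k : ℤ, g x (m + δ) = (k : ℝ) :=
        fun m hm => hx _ (Or.inr ⟨m, hm, rfl⟩)
      obtain ⟨d, hd0⟩ := h2 0 h00
      have hd : g x δ = (d : ℝ) := by rw [← zero_add δ]; exact hd0
      have hxχ : g x χ = 2 * (d : ℝ) := by
        have := hgδ' x
        rw [hd] at this
        linarith
      obtain ⟨μ, hμ1⟩ := hμex
      obtain ⟨hμΛ, b, hb⟩ := hμ1
      have hμμ0 : μ + μ ∈ lambda0 g Λ χ := by
        refine ⟨Λ.add_mem hμΛ hμΛ, 2 * b + 1, ?_⟩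
        rw [map_add (g χ), hb]
        push_cast; ring
      obtain ⟨f, hf⟩ := h0 (μ + μ) hμμ0
      have hf2 : g x μ + g x μ = (f : ℝ) := by rw [← map_add]; exact hf
      -- for l ∈ Λ₁, l - μ ∈ Λ₀
      have hsub0 : ∀ m, m ∈ lambda1 g Λ χ → m - μ ∈ lambda0 g Λ χ := by
        rintro m ⟨hm, c, hc⟩
        refine ⟨Λ.sub_mem hm hμΛ, c - b, ?_⟩
        rw [map_sub (g χ), hb, hc]
        push_cast; ring
      rcases Int.even_or_odd f with ⟨f', hf'⟩ | ⟨f', hf'⟩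
      · -- f even : x ∈ Λ₀
        have hfr : (f : ℝ) = (f' : ℝ) + f' := by exact_mod_cast hf'
        have hxμ : g x μ = (f' : ℝ) := by linarith
        have hxΛ : x ∈ Λ := by
          refine hmem x (fun m hm => ?_)
          rcases hdich m hm with h0' | h1'
          · exact h0 m h0'
          · obtain ⟨p, hp⟩ := h0 (m - μ) (hsub0 m h1')
            refine ⟨p + f', ?_⟩
            have e1 : g x m - g x μ = (p : ℝ) := by rw [← map_sub]; exact hp
            push_cast
            linarith
        exact Or.inl ⟨hxΛ, d, by rw [hsymm χ x, hxχ]⟩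
      · -- f odd : x - δ ∈ Λ₀, x ∈ Λ₂
        have hfr : (f : ℝ) = 2 * (f' : ℝ) + 1 := by exact_mod_cast hf'
        have hxμ : g x μ = (f' : ℝ) + 1 / 2 := by linarith
        have hyΛ : x - δ ∈ Λ := by
          refine hmem _ (fun m hm => ?_)
          have e0 : g (x - δ) m = g x m - g δ m := by
            rw [map_sub, LinearMap.sub_apply]
          rcases hdich m hm with ⟨_, c, hc⟩ | h1'
          · obtain ⟨p, hp⟩ := h0 m ⟨hm, c, hc⟩
            refine ⟨p - c, ?_⟩
            rw [e0, hp, hgδ m, hc]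
            push_cast; ring
          · obtain ⟨p, hp⟩ := h0 (m - μ) (hsub0 m h1')
            obtain ⟨_, c, hc⟩ := h1'
            refine ⟨p + f' - c, ?_⟩
            have e1 : g x m - g x μ = (p : ℝ) := by rw [← map_sub]; exact hp
            rw [e0, hgδ m, hc]
            push_cast
            linarith
        have hy0 : x - δ ∈ lambda0 g Λ χ := by
          refine ⟨hyΛ, d - kδ, ?_⟩
          rw [map_sub (g χ), hsymm χ x, hxχ, hχδ]
          push_cast; ring
        exact Or.inr ⟨x - δ, hy0, by show x - δ + δ = x; abel⟩
    · rintro m ⟨-, b, hb⟩ n ⟨-, c, hc⟩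
      refine ⟨b + c + kδ, ?_⟩
      rw [hb, hc]
      push_cast; ring
end
end

section
/- With Λ even self-dual with respect to ⊘, χ ∈ Λ, δ = χ/2 ∉ Λ, δ ⊘ δ ∈ ℤ, the shifted lattice Λ_O := Λ₀ ∪ Λ₃ is self-dual with respect to ⊘: Λ_O* = Λ_O. -/
noncomputable section

/-!
Fix `μ ∈ Λ₁` (it exists, otherwise `δ ∈ Λ* = Λ`). Then `Λ = Λ₀ ∪ (Λ₀ + μ)`, and since `2μ ∈ Λ₀`
every `x ∈ Λ₀*` has `x ⊘ μ ∈ ½ℤ`; as `δ ⊘ μ ∈ ℤ + ½`, either `x` or `x - δ` pairs integrally with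
`μ`, hence lies in `Λ`. So `Λ₀* = Λ ∪ (Λ + δ)`, and the dual of `Λ₀ ∪ (Λ₀ + δ)` consists of the
`x ∈ Λ ∪ (Λ + δ)` with `x ⊘ δ ∈ ℤ`, which, as `δ ⊘ δ ∈ ℤ`, is `Λ₀ ∪ (Λ₀ + δ)` again.
When `δ ⊘ δ` is odd, `χ' = χ + 2μ` has the same `Λ₀` and `Λ₀ + χ'/2 = Λ₁ + δ`, which reduces
this case to the previous one.
-/

def intReals : AddSubgroup ℝ := (Int.castAddHom ℝ).range

lemma mem_intReals {r : ℝ} : r ∈ intReals ↔ ∃ k : ℤ, r = k := by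
  simp [intReals, AddSubgroup.mem_zmultiples_iff, eq_comm]

lemma add_mem_intReals_or_of_odd {a b : ℝ} (ha : a + a ∈ intReals)
    (hb : ∃ n : ℤ, b + b = 2 * n + 1) :
    a ∈ intReals ∨ a - b ∈ intReals := by
  obtain ⟨m, hm⟩ := mem_intReals.1 ha
  obtain ⟨n, hn⟩ := hb
  rcases Int.even_or_odd m with ⟨j, rfl⟩ | ⟨j, rfl⟩
  · exact .inl (mem_intReals.2 ⟨j, by push_cast at hm; linarith⟩)
  · exact .inr (mem_intReals.2 ⟨j - n, by push_cast at hm ⊢; linarith⟩)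

section Dual

variable {N : ℕ} {g : LinearMap.BilinForm ℝ (Fin N → ℝ)}

lemma mem_dualSet_iff {L : Set (Fin N → ℝ)} {x : Fin N → ℝ} :
    x ∈ dualSet g L ↔ ∀ l ∈ L, g x l ∈ intReals := by
  simp only [dualSet, Set.mem_ofPred_eq, mem_intReals]

lemma dualSet_anti {L M : Set (Fin N → ℝ)} (h : L ⊆ M) : dualSet g M ⊆ dualSet g L :=
  fun _ hx l hl => hx l (h hl)

lemma mem_shiftSet_iff {L : Set (Fin N → ℝ)} {v x : Fin N → ℝ} :
    x ∈ shiftSet L v ↔ x - v ∈ L := by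
  simp [shiftSet, sub_eq_add_neg]

lemma shiftSet_shiftSet (L : Set (Fin N → ℝ)) (u v : Fin N → ℝ) :
    shiftSet (shiftSet L u) v = shiftSet L (u + v) := by
  ext x
  simp only [mem_shiftSet_iff, sub_add_eq_sub_sub, sub_right_comm]

lemma mem_dualSet_union_shiftSet_iff {L : Set (Fin N → ℝ)} (hL : 0 ∈ L) {v x : Fin N → ℝ} :
    x ∈ dualSet g (L ∪ shiftSet L v) ↔ x ∈ dualSet g L ∧ g x v ∈ intReals := by
  simp only [mem_dualSet_iff, Set.mem_union, or_imp, forall_and, shiftSet, Set.forall_mem_image]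
  exact ⟨fun ⟨hL', hshift⟩ => ⟨hL', by simpa using hshift hL⟩,
    fun ⟨hL', hv⟩ => ⟨hL', fun l hl => (map_add (g x) l v).symm ▸ add_mem (hL' l hl) hv⟩⟩

end Dual

section SelfDual

variable {N : ℕ} {g : LinearMap.BilinForm ℝ (Fin N → ℝ)} {Λ : AddSubgroup (Fin N → ℝ)}
  {χ : Fin N → ℝ}

lemma apply_half_smul (g : LinearMap.BilinForm ℝ (Fin N → ℝ)) (χ y : Fin N → ℝ) :
    g ((2 : ℝ)⁻¹ • χ) y = 2⁻¹ * g χ y := by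
  rw [LinearMap.map_smul₂, smul_eq_mul]

lemma half_smul_add_two_nsmul (χ μ : Fin N → ℝ) :
    (2 : ℝ)⁻¹ • (χ + 2 • μ) = (2 : ℝ)⁻¹ • χ + μ := by
  rw [smul_add, two_nsmul, ← two_smul ℝ μ, smul_smul, inv_mul_cancel₀ two_ne_zero, one_smul]

lemma mem_lambda0_iff {l : Fin N → ℝ} :
    l ∈ lambda0 g Λ χ ↔ l ∈ Λ ∧ g ((2 : ℝ)⁻¹ • χ) l ∈ intReals := by
  simp only [lambda0, Set.mem_ofPred_eq, mem_intReals, apply_half_smul]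
  exact and_congr_right fun _ => exists_congr fun k => by constructor <;> intro h <;> linarith

lemma zero_mem_lambda0 : (0 : Fin N → ℝ) ∈ lambda0 g Λ χ :=
  ⟨Λ.zero_mem, 0, by simp⟩

lemma lambda1_eq_shiftSet {μ : Fin N → ℝ} (hμ : μ ∈ lambda1 g Λ χ) :
    lambda1 g Λ χ = shiftSet (lambda0 g Λ χ) μ := by
  obtain ⟨hμΛ, kμ, hkμ⟩ := hμ
  ext l
  rw [mem_shiftSet_iff]
  constructor
  · rintro ⟨hl, k, hk⟩
    exact ⟨Λ.sub_mem hl hμΛ, k - kμ, by rw [map_sub, hk, hkμ]; push_cast; ring⟩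
  · rintro ⟨hl, k, hk⟩
    refine ⟨by simpa using Λ.add_mem hl hμΛ, k + kμ, ?_⟩
    rw [map_sub, hkμ] at hk
    push_cast
    linarith

variable (hselfdual : (Λ : Set (Fin N → ℝ)) = dualSet g (Λ : Set (Fin N → ℝ)))
include hselfdual

lemma apply_mem_intReals {x y : Fin N → ℝ} (hx : x ∈ Λ) (hy : y ∈ Λ) : g x y ∈ intReals :=
  mem_dualSet_iff.1 (hselfdual ▸ hx : x ∈ dualSet g Λ) y hy

lemma mem_of_forall_apply_mem_intReals {x : Fin N → ℝ} (hx : ∀ l ∈ Λ, g x l ∈ intReals) :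
    x ∈ Λ := by
  have : x ∈ dualSet g (Λ : Set (Fin N → ℝ)) := mem_dualSet_iff.2 hx
  rwa [← hselfdual] at this

lemma lambda0_add_two_nsmul {μ : Fin N → ℝ} (hμ : μ ∈ Λ) :
    lambda0 g Λ (χ + 2 • μ) = lambda0 g Λ χ := by
  ext l
  simp only [mem_lambda0_iff, half_smul_add_two_nsmul, LinearMap.map_add₂]
  exact and_congr_right fun hl => add_mem_cancel_right (apply_mem_intReals hselfdual hμ hl)

lemma lambda0_union_shiftSet_subset_dualSet (hsymm : ∀ x y, g x y = g y x)
    (hnorm : g ((2 : ℝ)⁻¹ • χ) ((2 : ℝ)⁻¹ • χ) ∈ intReals) :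
    lambda0 g Λ χ ∪ shiftSet (lambda0 g Λ χ) ((2 : ℝ)⁻¹ • χ) ⊆
      dualSet g (lambda0 g Λ χ ∪ shiftSet (lambda0 g Λ χ) ((2 : ℝ)⁻¹ • χ)) := by
  have hΛ₀ : ∀ y ∈ lambda0 g Λ χ,
      y ∈ dualSet g (lambda0 g Λ χ) ∧ g y ((2 : ℝ)⁻¹ • χ) ∈ intReals := fun y hy =>
    ⟨mem_dualSet_iff.2 fun l hl => apply_mem_intReals hselfdual hy.1 hl.1,
      hsymm y _ ▸ (mem_lambda0_iff.1 hy).2⟩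
  intro x hx
  rw [mem_dualSet_union_shiftSet_iff zero_mem_lambda0]
  rcases hx with hx | ⟨y, hy, rfl⟩
  · exact hΛ₀ x hx
  · obtain ⟨hyd, hyδ⟩ := hΛ₀ y hy
    refine ⟨mem_dualSet_iff.2 fun l hl => ?_, ?_⟩ <;> rw [LinearMap.map_add₂]
    · exact add_mem (mem_dualSet_iff.1 hyd l hl) (mem_lambda0_iff.1 hl).2
    · exact add_mem hyδ hnorm

variable (hχ : χ ∈ Λ)
include hχ

lemma mem_lambda0_or_mem_lambda1 {l : Fin N → ℝ} (hl : l ∈ Λ) :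
    l ∈ lambda0 g Λ χ ∨ l ∈ lambda1 g Λ χ := by
  obtain ⟨k, hk⟩ := mem_intReals.1 (apply_mem_intReals hselfdual hχ hl)
  rcases Int.even_or_odd k with ⟨m, rfl⟩ | ⟨m, rfl⟩
  · exact .inl ⟨hl, m, by rw [hk]; push_cast; ring⟩
  · exact .inr ⟨hl, m, by rw [hk]; push_cast; ring⟩

lemma exists_mem_lambda1 (hhalf : (2 : ℝ)⁻¹ • χ ∉ Λ) : ∃ μ, μ ∈ lambda1 g Λ χ := by
  by_contra! h
  refine hhalf (mem_of_forall_apply_mem_intReals hselfdual fun l hl => ?_)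
  have := (mem_lambda0_or_mem_lambda1 hselfdual hχ hl).resolve_right (h l)
  exact (mem_lambda0_iff.1 this).2

lemma mem_of_mem_dualSet_lambda0 {μ : Fin N → ℝ} (hμ : μ ∈ lambda1 g Λ χ) {y : Fin N → ℝ}
    (hy : y ∈ dualSet g (lambda0 g Λ χ))
    (hyμ : g y μ ∈ intReals) : y ∈ Λ := by
  have hΛ : (Λ : Set (Fin N → ℝ)) ⊆ lambda0 g Λ χ ∪ shiftSet (lambda0 g Λ χ) μ := fun l hl =>
    (mem_lambda0_or_mem_lambda1 hselfdual hχ hl).imp id (lambda1_eq_shiftSet hμ ▸ ·)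
  show y ∈ (Λ : Set (Fin N → ℝ))
  rw [hselfdual]
  exact dualSet_anti hΛ ((mem_dualSet_union_shiftSet_iff zero_mem_lambda0).2 ⟨hy, hyμ⟩)

lemma mem_or_sub_half_mem_of_mem_dualSet_lambda0 (hhalf : (2 : ℝ)⁻¹ • χ ∉ Λ) {x : Fin N → ℝ}
    (hx : x ∈ dualSet g (lambda0 g Λ χ)) : x ∈ Λ ∨ x - (2 : ℝ)⁻¹ • χ ∈ Λ := by
  obtain ⟨μ, hμ⟩ := exists_mem_lambda1 hselfdual hχ hhalf
  obtain ⟨hμΛ, k, hk⟩ := id hμ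
  have h2μ : μ + μ ∈ lambda0 g Λ χ :=
    ⟨Λ.add_mem hμΛ hμΛ, 2 * k + 1, by rw [map_add, hk]; push_cast; ring⟩
  have hxμ : g x μ + g x μ ∈ intReals := map_add (g x) μ μ ▸ mem_dualSet_iff.1 hx _ h2μ
  have hδμ : ∃ n : ℤ, g ((2 : ℝ)⁻¹ • χ) μ + g ((2 : ℝ)⁻¹ • χ) μ = 2 * n + 1 :=
    ⟨k, by rw [apply_half_smul, hk]; ring⟩
  refine (add_mem_intReals_or_of_odd hxμ hδμ).imp
    (mem_of_mem_dualSet_lambda0 hselfdual hχ hμ hx) fun hxδμ => ?_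
  refine mem_of_mem_dualSet_lambda0 hselfdual hχ hμ (mem_dualSet_iff.2 fun l hl => ?_)
    (by rwa [LinearMap.map_sub₂])
  rw [LinearMap.map_sub₂]
  exact sub_mem (mem_dualSet_iff.1 hx l hl) (mem_lambda0_iff.1 hl).2

theorem dualSet_lambda0_union_shiftSet_lambda0 (hsymm : ∀ x y, g x y = g y x)
    (hhalf : (2 : ℝ)⁻¹ • χ ∉ Λ) (hnorm : g ((2 : ℝ)⁻¹ • χ) ((2 : ℝ)⁻¹ • χ) ∈ intReals) :
    dualSet g (lambda0 g Λ χ ∪ shiftSet (lambda0 g Λ χ) ((2 : ℝ)⁻¹ • χ)) =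
      lambda0 g Λ χ ∪ shiftSet (lambda0 g Λ χ) ((2 : ℝ)⁻¹ • χ) := by
  refine Set.Subset.antisymm (fun x hx => ?_)
    (lambda0_union_shiftSet_subset_dualSet hselfdual hsymm hnorm)
  obtain ⟨hx₀, hxδ⟩ := (mem_dualSet_union_shiftSet_iff zero_mem_lambda0).1 hx
  rw [hsymm] at hxδ
  rcases mem_or_sub_half_mem_of_mem_dualSet_lambda0 hselfdual hχ hhalf hx₀ with h | h
  · exact .inl (mem_lambda0_iff.2 ⟨h, hxδ⟩)
  · refine .inr (mem_shiftSet_iff.2 (mem_lambda0_iff.2 ⟨h, ?_⟩))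
    rw [map_sub]
    exact sub_mem hxδ hnorm

theorem dualSet_lambda0_union_shiftSet_lambda1 (hsymm : ∀ x y, g x y = g y x)
    (hhalf : (2 : ℝ)⁻¹ • χ ∉ Λ) (hnorm : g ((2 : ℝ)⁻¹ • χ) ((2 : ℝ)⁻¹ • χ) ∈ intReals) :
    dualSet g (lambda0 g Λ χ ∪ shiftSet (lambda1 g Λ χ) ((2 : ℝ)⁻¹ • χ)) =
      lambda0 g Λ χ ∪ shiftSet (lambda1 g Λ χ) ((2 : ℝ)⁻¹ • χ) := by
  obtain ⟨μ, hμ⟩ := exists_mem_lambda1 hselfdual hχ hhalf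
  have hχ' : χ + 2 • μ ∈ Λ := Λ.add_mem hχ (Λ.nsmul_mem hμ.1 2)
  have hhalf' : (2 : ℝ)⁻¹ • (χ + 2 • μ) ∉ Λ := by
    rw [half_smul_add_two_nsmul]
    exact fun h => hhalf (by simpa using Λ.sub_mem h hμ.1)
  have hnorm' : g ((2 : ℝ)⁻¹ • (χ + 2 • μ)) ((2 : ℝ)⁻¹ • (χ + 2 • μ)) ∈ intReals := by
    have hexpand : g ((2 : ℝ)⁻¹ • χ + μ) ((2 : ℝ)⁻¹ • χ + μ) =
        g ((2 : ℝ)⁻¹ • χ) ((2 : ℝ)⁻¹ • χ) + (g χ μ + g μ μ) := by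
      rw [map_add, LinearMap.map_add₂, LinearMap.map_add₂, hsymm μ, apply_half_smul g χ μ]; ring
    rw [half_smul_add_two_nsmul, hexpand]
    exact add_mem hnorm (add_mem (apply_mem_intReals hselfdual hχ hμ.1)
      (apply_mem_intReals hselfdual hμ.1 hμ.1))
  have hshift : shiftSet (lambda1 g Λ χ) ((2 : ℝ)⁻¹ • χ) =
      shiftSet (lambda0 g Λ (χ + 2 • μ)) ((2 : ℝ)⁻¹ • (χ + 2 • μ)) := by
    rw [lambda1_eq_shiftSet hμ, shiftSet_shiftSet, lambda0_add_two_nsmul hselfdual hμ.1,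
      half_smul_add_two_nsmul, add_comm]
  rw [hshift, ← lambda0_add_two_nsmul hselfdual hμ.1]
  exact dualSet_lambda0_union_shiftSet_lambda0 hselfdual hχ' hsymm hhalf' hnorm'

end SelfDual

theorem statement3_general {N : ℕ}
    (g : LinearMap.BilinForm ℝ (Fin N → ℝ))
    (hsymm : ∀ x y, g x y = g y x)
    (Λ : AddSubgroup (Fin N → ℝ))
    (hselfdual : (Λ : Set (Fin N → ℝ)) = dualSet g (Λ : Set (Fin N → ℝ)))
    (χ : Fin N → ℝ) (hχ : χ ∈ Λ)
    (δ : Fin N → ℝ) (hδdef : δ = (2 : ℝ)⁻¹ • χ)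
    (hδnot : δ ∉ Λ)
    (hδint : ∃ k : ℤ, g δ δ = (k : ℝ))
    (Λ₂ Λ₃ : Set (Fin N → ℝ))
    (hcase0 : (∃ k : ℤ, g δ δ = 2 * (k : ℝ)) →
      Λ₂ = shiftSet (lambda1 g Λ χ) δ ∧ Λ₃ = shiftSet (lambda0 g Λ χ) δ)
    (hcase1 : (∃ k : ℤ, g δ δ = 2 * (k : ℝ) + 1) →
      Λ₂ = shiftSet (lambda0 g Λ χ) δ ∧ Λ₃ = shiftSet (lambda1 g Λ χ) δ) :
    dualSet g (lambda0 g Λ χ ∪ Λ₃) = lambda0 g Λ χ ∪ Λ₃ := by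
  subst hδdef
  obtain ⟨k, hk⟩ := hδint
  have hnorm := mem_intReals.2 ⟨k, hk⟩
  rcases Int.even_or_odd k with ⟨j, rfl⟩ | ⟨j, rfl⟩
  · rw [(hcase0 ⟨j, by rw [hk]; push_cast; ring⟩).2]
    exact dualSet_lambda0_union_shiftSet_lambda0 hselfdual hχ hsymm hδnot hnorm
  · rw [(hcase1 ⟨j, by rw [hk]; push_cast; ring⟩).2]
    exact dualSet_lambda0_union_shiftSet_lambda1 hselfdual hχ hsymm hδnot hnorm

/-- The shifted lattice `Λ_O := Λ₀ ∪ Λ₃` is self-dual with respect to `⊘`: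
`Λ_O* = Λ_O`. -/
theorem statement3 {N : ℕ} (hN : 1 ≤ N)
    (g : LinearMap.BilinForm ℝ (Fin N → ℝ))
    (hsymm : ∀ x y, g x y = g y x)
    (hnondeg : ∀ x, (∀ y, g x y = 0) → x = 0)
    (Λ : AddSubgroup (Fin N → ℝ))
    (heven : ∀ l ∈ Λ, ∃ k : ℤ, g l l = 2 * (k : ℝ))
    (hselfdual : (Λ : Set (Fin N → ℝ)) = dualSet g (Λ : Set (Fin N → ℝ)))
    (χ : Fin N → ℝ) (hχ : χ ∈ Λ)
    (δ : Fin N → ℝ) (hδdef : δ = (2 : ℝ)⁻¹ • χ)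
    (hδnot : δ ∉ Λ)
    (hδint : ∃ k : ℤ, g δ δ = (k : ℝ))
    (Λ₂ Λ₃ : Set (Fin N → ℝ))
    (hcase0 : (∃ k : ℤ, g δ δ = 2 * (k : ℝ)) →
      Λ₂ = shiftSet (lambda1 g Λ χ) δ ∧ Λ₃ = shiftSet (lambda0 g Λ χ) δ)
    (hcase1 : (∃ k : ℤ, g δ δ = 2 * (k : ℝ) + 1) →
      Λ₂ = shiftSet (lambda0 g Λ χ) δ ∧ Λ₃ = shiftSet (lambda1 g Λ χ) δ) :
    dualSet g (lambda0 g Λ χ ∪ Λ₃) = lambda0 g Λ χ ∪ Λ₃ :=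
  statement3_general g hsymm Λ hselfdual χ hχ δ hδdef hδnot hδint Λ₂ Λ₃ hcase0 hcase1
end
end

section
/- With Λ even self-dual with respect to ⊘, χ ∈ Λ, δ = χ/2 ∉ Λ, δ ⊘ δ ∈ ℤ, the shifted lattice Λ_O := Λ₀ ∪ Λ₃ is even: every λ ∈ Λ_O satisfies λ ⊘ λ ∈ 2ℤ. -/
noncomputable section

/-- The shifted lattice `Λ_O := Λ₀ ∪ Λ₃` is even: every `λ ∈ Λ_O` satisfies
`λ ⊘ λ ∈ 2ℤ`. -/
theorem statement4 {N : ℕ} (hN : 1 ≤ N)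
    (g : LinearMap.BilinForm ℝ (Fin N → ℝ))
    (hsymm : ∀ x y, g x y = g y x)
    (hnondeg : ∀ x, (∀ y, g x y = 0) → x = 0)
    (Λ : AddSubgroup (Fin N → ℝ))
    (heven : ∀ l ∈ Λ, ∃ k : ℤ, g l l = 2 * (k : ℝ))
    (hselfdual : (Λ : Set (Fin N → ℝ)) = dualSet g (Λ : Set (Fin N → ℝ)))
    (χ : Fin N → ℝ) (hχ : χ ∈ Λ)
    (δ : Fin N → ℝ) (hδdef : δ = (2 : ℝ)⁻¹ • χ)
    (hδnot : δ ∉ Λ)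
    (hδint : ∃ k : ℤ, g δ δ = (k : ℝ))
    (Λ₂ Λ₃ : Set (Fin N → ℝ))
    (hcase0 : (∃ k : ℤ, g δ δ = 2 * (k : ℝ)) →
      Λ₂ = shiftSet (lambda1 g Λ χ) δ ∧ Λ₃ = shiftSet (lambda0 g Λ χ) δ)
    (hcase1 : (∃ k : ℤ, g δ δ = 2 * (k : ℝ) + 1) →
      Λ₂ = shiftSet (lambda0 g Λ χ) δ ∧ Λ₃ = shiftSet (lambda1 g Λ χ) δ) :
    ∀ l ∈ lambda0 g Λ χ ∪ Λ₃, ∃ k : ℤ, g l l = 2 * (k : ℝ) := by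
  intro l hl
  have hδχ : ∀ y, g δ y = (2 : ℝ)⁻¹ * g χ y := by
    intro y; rw [hδdef]; simp
  rcases hl with hl | hl
  · exact heven l hl.1
  · obtain ⟨m, hm⟩ := hδint
    have hexp : ∀ lam : Fin N → ℝ,
        g (lam + δ) (lam + δ) = g lam lam + 2 * ((2:ℝ)⁻¹ * g χ lam) + g δ δ := by
      intro lam
      have h1 : g lam δ = g δ lam := hsymm lam δ
      simp only [map_add, LinearMap.add_apply, h1, hδχ]
      ring
    rcases Int.even_or_odd m with ⟨j, hj⟩ | ⟨j, hj⟩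
    · have h0 := (hcase0 ⟨j, by rw [hm, hj]; push_cast; ring⟩).2
      rw [h0] at hl
      obtain ⟨lam, ⟨hlΛ, k, hk⟩, rfl⟩ := hl
      obtain ⟨k₁, hk₁⟩ := heven lam hlΛ
      refine ⟨k₁ + k + j, ?_⟩
      rw [hexp lam, hk₁, hk, hm, hj]
      push_cast; ring
    · have h1 := (hcase1 ⟨j, by rw [hm, hj]; push_cast; ring⟩).2
      rw [h1] at hl
      obtain ⟨lam, ⟨hlΛ, k, hk⟩, rfl⟩ := hl
      obtain ⟨k₁, hk₁⟩ := heven lam hlΛ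
      refine ⟨k₁ + k + j + 1, ?_⟩
      rw [hexp lam, hk₁, hk, hm, hj]
      push_cast; ring
end
end

section
/- With Λ even self-dual with respect to ⊘, χ ∈ Λ, δ = χ/2 ∉ Λ, δ ⊘ δ ∈ ℤ, the shifted lattice Λ_NS := Λ₀ ∪ Λ₂ is odd with respect to ⊘: it is integral, and every λ ∈ Λ₂ satisfies λ ⊘ λ ∈ 2ℤ+1; moreover Λ₂ is nonempty (since Λ₁ is nonempty), so Λ_NS contains an element of odd norm. -/
noncomputable section

lemma aux5 {N : ℕ} (g : LinearMap.BilinForm ℝ (Fin N → ℝ))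
    (hsymm : ∀ x y, g x y = g y x)
    (Λ : AddSubgroup (Fin N → ℝ))
    (heven : ∀ l ∈ Λ, ∃ k : ℤ, g l l = 2 * (k : ℝ))
    (hΛint : ∀ x ∈ Λ, ∀ y ∈ Λ, ∃ k : ℤ, g x y = (k : ℝ))
    (χ : Fin N → ℝ) (δ : Fin N → ℝ)
    (hδl : ∀ l, g δ l = 2⁻¹ * g χ l)
    (ε j : ℤ) (hδδ : g δ δ = 2 * (j : ℝ) + 1 - (ε : ℝ))
    (S : Set (Fin N → ℝ))
    (hSsub : ∀ μ ∈ S, μ ∈ Λ)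
    (hSpar : ∀ μ ∈ S, ∃ k : ℤ, g χ μ = 2 * (k : ℝ) + (ε : ℝ)) :
    (lambda0 g Λ χ ∪ shiftSet S δ) ⊆ dualSet g (lambda0 g Λ χ ∪ shiftSet S δ) ∧
    (∀ l ∈ shiftSet S δ, ∃ k : ℤ, g l l = 2 * (k : ℝ) + 1) := by
  have hxδ : ∀ x, g x δ = 2⁻¹ * g χ x := by
    intro x; rw [hsymm, hδl]
  have hexp : ∀ μ ν, g (μ + δ) (ν + δ)
      = g μ ν + 2⁻¹ * g χ μ + 2⁻¹ * g χ ν + g δ δ := by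
    intro μ ν
    have h1 : g (μ + δ) (ν + δ) = g μ ν + g μ δ + g δ ν + g δ δ := by
      simp only [map_add, LinearMap.add_apply]; ring
    rw [h1, hδl, hxδ]; try ring
  constructor
  · rintro x (⟨hxΛ, a, ha⟩ | ⟨μ, hμS, rfl⟩)
    · rintro l (⟨hlΛ, b, hb⟩ | ⟨ν, hνS, rfl⟩)
      · exact hΛint x hxΛ l hlΛ
      · obtain ⟨c, hc⟩ := hΛint x hxΛ ν (hSsub ν hνS)
        refine ⟨c + a, ?_⟩
        have : g x (ν + δ) = g x ν + g x δ := by simp [map_add]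
        rw [this, hc, hxδ, ha]; push_cast; ring
    · rintro l (⟨hlΛ, b, hb⟩ | ⟨ν, hνS, rfl⟩)
      · obtain ⟨c, hc⟩ := hΛint μ (hSsub μ hμS) l hlΛ
        refine ⟨c + b, ?_⟩
        have : g (μ + δ) l = g μ l + g δ l := by
          simp only [map_add, LinearMap.add_apply]
        rw [this, hc, hδl, hb]; push_cast; ring
      · obtain ⟨c, hc⟩ := hΛint μ (hSsub μ hμS) ν (hSsub ν hνS)
        obtain ⟨a, ha⟩ := hSpar μ hμS
        obtain ⟨b, hb⟩ := hSpar ν hνS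
        refine ⟨c + a + b + ε + 2 * j + 1 - ε, ?_⟩
        rw [hexp, hc, ha, hb, hδδ]; push_cast; ring
  · rintro l ⟨μ, hμS, rfl⟩
    obtain ⟨c, hc⟩ := heven μ (hSsub μ hμS)
    obtain ⟨a, ha⟩ := hSpar μ hμS
    refine ⟨c + a + j, ?_⟩
    rw [hexp, hc, ha, hδδ]; push_cast; ring

/-- The shifted lattice `Λ_NS := Λ₀ ∪ Λ₂` is odd with respect to `⊘`: it is integral,
every `λ ∈ Λ₂` satisfies `λ ⊘ λ ∈ 2ℤ+1`; moreover `Λ₂` is nonempty (since `Λ₁` is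
nonempty), so `Λ_NS` contains an element of odd norm. -/
theorem statement5 {N : ℕ} (hN : 1 ≤ N)
    (g : LinearMap.BilinForm ℝ (Fin N → ℝ))
    (hsymm : ∀ x y, g x y = g y x)
    (hnondeg : ∀ x, (∀ y, g x y = 0) → x = 0)
    (Λ : AddSubgroup (Fin N → ℝ))
    (heven : ∀ l ∈ Λ, ∃ k : ℤ, g l l = 2 * (k : ℝ))
    (hselfdual : (Λ : Set (Fin N → ℝ)) = dualSet g (Λ : Set (Fin N → ℝ)))
    (χ : Fin N → ℝ) (hχ : χ ∈ Λ)
    (δ : Fin N → ℝ) (hδdef : δ = (2 : ℝ)⁻¹ • χ)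
    (hδnot : δ ∉ Λ)
    (hδint : ∃ k : ℤ, g δ δ = (k : ℝ))
    (Λ₂ Λ₃ : Set (Fin N → ℝ))
    (hcase0 : (∃ k : ℤ, g δ δ = 2 * (k : ℝ)) →
      Λ₂ = shiftSet (lambda1 g Λ χ) δ ∧ Λ₃ = shiftSet (lambda0 g Λ χ) δ)
    (hcase1 : (∃ k : ℤ, g δ δ = 2 * (k : ℝ) + 1) →
      Λ₂ = shiftSet (lambda0 g Λ χ) δ ∧ Λ₃ = shiftSet (lambda1 g Λ χ) δ) :
    (lambda0 g Λ χ ∪ Λ₂) ⊆ dualSet g (lambda0 g Λ χ ∪ Λ₂) ∧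
    (∀ l ∈ Λ₂, ∃ k : ℤ, g l l = 2 * (k : ℝ) + 1) ∧
    (lambda1 g Λ χ).Nonempty ∧ Λ₂.Nonempty ∧
    (∃ l ∈ lambda0 g Λ χ ∪ Λ₂, ∃ k : ℤ, g l l = 2 * (k : ℝ) + 1) := by
  have hΛint : ∀ x ∈ Λ, ∀ y ∈ Λ, ∃ k : ℤ, g x y = (k : ℝ) := by
    intro x hx y hy
    have hx' : x ∈ dualSet g (Λ : Set (Fin N → ℝ)) := hselfdual ▸ hx
    exact hx' y hy
  have hδl : ∀ l, g δ l = 2⁻¹ * g χ l := by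
    intro l; rw [hδdef]; simp
  -- Λ₁ is nonempty
  have hΛ1ne : (lambda1 g Λ χ).Nonempty := by
    by_contra h
    rw [Set.not_nonempty_iff_eq_empty] at h
    apply hδnot
    rw [← SetLike.mem_coe, hselfdual]
    intro l hl
    obtain ⟨n, hn⟩ := hΛint χ hχ l hl
    rcases Int.even_or_odd n with ⟨a, hae⟩ | ⟨a, hae⟩
    · exact ⟨a, by rw [hδl, hn, hae]; push_cast; ring⟩
    · exfalso
      have : l ∈ lambda1 g Λ χ :=
        ⟨hl, a, by rw [hn, hae]; push_cast; ring⟩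
      rw [h] at this; exact this
  obtain ⟨μ₁, hμ₁⟩ := hΛ1ne
  obtain ⟨m, hm⟩ := hδint
  rcases Int.even_or_odd m with ⟨j, hj⟩ | ⟨j, hj⟩
  · -- g δ δ even, Λ₂ = Λ₁ + δ
    obtain ⟨h2, -⟩ := hcase0 ⟨j, by rw [hm, hj]; push_cast; ring⟩
    subst h2
    have hδδ : g δ δ = 2 * (j : ℝ) + 1 - ((1 : ℤ) : ℝ) := by
      rw [hm, hj]; push_cast; ring
    obtain ⟨hdual, hdiag⟩ := aux5 g hsymm Λ heven hΛint χ δ hδl 1 j hδδ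
      (lambda1 g Λ χ) (fun μ hμ => hμ.1)
      (fun μ hμ => by obtain ⟨-, k, hk⟩ := hμ; exact ⟨k, by rw [hk]; push_cast; ring⟩)
    have hΛ2ne : (shiftSet (lambda1 g Λ χ) δ).Nonempty := ⟨μ₁ + δ, μ₁, hμ₁, rfl⟩
    obtain ⟨l₂, hl₂⟩ := hΛ2ne
    exact ⟨hdual, hdiag, ⟨μ₁, hμ₁⟩, ⟨l₂, hl₂⟩, l₂, Or.inr hl₂, hdiag l₂ hl₂⟩
  · -- g δ δ odd, Λ₂ = Λ₀ + δ
    obtain ⟨h2, -⟩ := hcase1 ⟨j, by rw [hm, hj]; push_cast; ring⟩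
    subst h2
    have hδδ : g δ δ = 2 * (j : ℝ) + 1 - ((0 : ℤ) : ℝ) := by
      rw [hm, hj]; push_cast; ring
    obtain ⟨hdual, hdiag⟩ := aux5 g hsymm Λ heven hΛint χ δ hδl 0 j hδδ
      (lambda0 g Λ χ) (fun μ hμ => hμ.1)
      (fun μ hμ => by obtain ⟨-, k, hk⟩ := hμ; exact ⟨k, by rw [hk]; push_cast; ring⟩)
    have h0 : (0 : Fin N → ℝ) ∈ lambda0 g Λ χ := ⟨Λ.zero_mem, 0, by simp⟩
    have hΛ2ne : (shiftSet (lambda0 g Λ χ) δ).Nonempty := ⟨0 + δ, 0, h0, rfl⟩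
    obtain ⟨l₂, hl₂⟩ := hΛ2ne
    exact ⟨hdual, hdiag, ⟨μ₁, hμ₁⟩, ⟨l₂, hl₂⟩, l₂, Or.inr hl₂, hdiag l₂ hl₂⟩
end
end

section
/- With Λ even self-dual with respect to ⊘, χ ∈ Λ, δ = χ/2 ∉ Λ, δ ⊘ δ ∈ ℤ, the shifted lattice Λ_O := Λ₀ ∪ Λ₃ is even self-dual with respect to ⊘, and the shifted lattice Λ_NS := Λ₀ ∪ Λ₂ is odd self-dual with respect to ⊘. -/
noncomputable section

lemma half_ne_int (a b : ℤ) : (a : ℝ) + 1/2 ≠ (b : ℝ) := by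
  intro h
  have h2 : ((2*a+1 : ℤ) : ℝ) = ((2*b : ℤ) : ℝ) := by push_cast; linarith
  have := Int.cast_injective (α := ℝ) h2
  omega

lemma lambda1_ne {N : ℕ} (g : LinearMap.BilinForm ℝ (Fin N → ℝ))
    (Λ : AddSubgroup (Fin N → ℝ))
    (hselfdual : (Λ : Set (Fin N → ℝ)) = dualSet g (Λ : Set (Fin N → ℝ)))
    (χ : Fin N → ℝ) (hχ : χ ∈ Λ)
    (δ : Fin N → ℝ) (hδdef : δ = (2 : ℝ)⁻¹ • χ)
    (hδnot : δ ∉ Λ) : ∃ m, m ∈ lambda1 g Λ χ := by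
  have hδy : ∀ y, g δ y = g χ y / 2 := by
    intro y; rw [hδdef]; simp [map_smul]; ring
  have hχΛ : ∀ l ∈ Λ, ∃ k : ℤ, g χ l = (k : ℝ) := by
    intro l hl
    have : χ ∈ dualSet g (Λ : Set (Fin N → ℝ)) := hselfdual ▸ hχ
    exact this l hl
  by_contra hno
  push_neg at hno
  apply hδnot
  have : δ ∈ dualSet g (Λ : Set (Fin N → ℝ)) := by
    intro l hl
    obtain ⟨k, hk⟩ := hχΛ l hl
    rcases Int.even_or_odd k with ⟨j, hj⟩ | ⟨j, hj⟩
    · exact ⟨j, by rw [hδy]; rw [hk]; push_cast [hj]; ring⟩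
    · exact absurd ⟨hl, j, by rw [hk]; push_cast [hj]; ring⟩ (hno l)
  rw [← SetLike.mem_coe, hselfdual]; exact this

lemma selfdual_aux {N : ℕ} (g : LinearMap.BilinForm ℝ (Fin N → ℝ))
    (hsymm : ∀ x y, g x y = g y x)
    (Λ : AddSubgroup (Fin N → ℝ))
    (hselfdual : (Λ : Set (Fin N → ℝ)) = dualSet g (Λ : Set (Fin N → ℝ)))
    (χ : Fin N → ℝ) (hχ : χ ∈ Λ)
    (δ : Fin N → ℝ) (hδdef : δ = (2 : ℝ)⁻¹ • χ)
    (hδnot : δ ∉ Λ)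
    (d : ℤ) (hd : g δ δ = (d : ℝ))
    (S : Set (Fin N → ℝ)) (p : ℤ) (hp : p = 0 ∨ p = 1)
    (hSsub : ∀ m ∈ S, m ∈ Λ)
    (hSne : ∃ m, m ∈ S)
    (hSpar : ∀ m ∈ S, ∃ k : ℤ, g χ m = 2 * (k : ℝ) + p)
    (hSfull : ∀ l ∈ Λ, (∃ k : ℤ, g χ l = 2 * (k : ℝ) + p) → l ∈ S) :
    dualSet g (lambda0 g Λ χ ∪ shiftSet S δ) = lambda0 g Λ χ ∪ shiftSet S δ := by
  have hδy : ∀ y, g δ y = g χ y / 2 := by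
    intro y; rw [hδdef]; simp [map_smul]; ring
  have hyδ : ∀ y, g y δ = g χ y / 2 := by
    intro y; rw [hsymm]; exact hδy y
  have hΛpair : ∀ a ∈ Λ, ∀ b ∈ Λ, ∃ k : ℤ, g a b = (k : ℝ) := by
    intro a ha b hb
    have : a ∈ dualSet g (Λ : Set (Fin N → ℝ)) := hselfdual ▸ ha
    exact this b hb
  have hχΛ : ∀ l ∈ Λ, ∃ k : ℤ, g χ l = (k : ℝ) := hΛpair χ hχ
  have hΛsplit : ∀ l ∈ Λ, (∃ k : ℤ, g χ l = 2 * (k : ℝ)) ∨ (∃ k : ℤ, g χ l = 2 * (k : ℝ) + 1) := by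
    intro l hl
    obtain ⟨k, hk⟩ := hχΛ l hl
    rcases Int.even_or_odd k with ⟨j, hj⟩ | ⟨j, hj⟩
    · exact Or.inl ⟨j, by rw [hk]; push_cast [hj]; ring⟩
    · exact Or.inr ⟨j, by rw [hk]; push_cast [hj]; ring⟩
  obtain ⟨μ₁, hμΛ, n₁, hn₁⟩ := lambda1_ne g Λ hselfdual χ hχ δ hδdef hδnot
  ext x
  constructor
  · -- dual ⊆ L
    intro hx
    have H0 : ∀ l ∈ lambda0 g Λ χ, ∃ k : ℤ, g x l = (k : ℝ) := by
      intro l hl; exact hx l (Or.inl hl)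
    -- step: x ∈ Λ or x - δ ∈ Λ
    have hstep : x ∈ Λ ∨ x - δ ∈ Λ := by
      have h2μ : μ₁ + μ₁ ∈ lambda0 g Λ χ :=
        ⟨Λ.add_mem hμΛ hμΛ, 2*n₁+1, by simp [map_add]; rw [hn₁]; push_cast; ring⟩
      obtain ⟨m, hm⟩ := H0 _ h2μ
      have hm' : 2 * g x μ₁ = (m : ℝ) := by
        have : g x (μ₁ + μ₁) = g x μ₁ + g x μ₁ := by simp [map_add]
        linarith [hm, this]
      rcases Int.even_or_odd m with ⟨j, hj⟩ | ⟨j, hj⟩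
      · -- g x μ₁ = j : x ∈ Λ
        left
        have hxμ : g x μ₁ = (j : ℝ) := by
          have : (m : ℝ) = 2*j := by push_cast [hj]; ring
          linarith
        rw [← SetLike.mem_coe, hselfdual]
        intro l hl
        rcases hΛsplit l hl with he | ⟨k, hk⟩
        · exact H0 l ⟨hl, he⟩
        · have hlm : l - μ₁ ∈ lambda0 g Λ χ :=
            ⟨Λ.sub_mem hl hμΛ, k - n₁, by simp [map_sub]; rw [hk, hn₁]; push_cast; ring⟩
          obtain ⟨k', hk'⟩ := H0 _ hlm
          refine ⟨k' + j, ?_⟩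
          have : g x (l - μ₁) = g x l - g x μ₁ := by simp [map_sub]
          rw [this] at hk'
          push_cast
          linarith
      · -- g x μ₁ = j + 1/2 : x - δ ∈ Λ
        right
        have hxμ : g x μ₁ = (j : ℝ) + 1/2 := by
          have : (m : ℝ) = 2*j+1 := by push_cast [hj]; ring
          linarith
        rw [← SetLike.mem_coe, hselfdual]
        intro l hl
        have hsub : g (x - δ) l = g x l - g χ l / 2 := by
          rw [map_sub, LinearMap.sub_apply, hδy]
        rcases hΛsplit l hl with ⟨k, hk⟩ | ⟨k, hk⟩
        · obtain ⟨k', hk'⟩ := H0 l ⟨hl, k, hk⟩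
          exact ⟨k' - k, by rw [hsub, hk', hk]; push_cast; ring⟩
        · have hlm : l - μ₁ ∈ lambda0 g Λ χ :=
            ⟨Λ.sub_mem hl hμΛ, k - n₁, by simp [map_sub]; rw [hk, hn₁]; push_cast; ring⟩
          obtain ⟨k', hk'⟩ := H0 _ hlm
          have hxl : g x l = (k' : ℝ) + j + 1/2 := by
            have : g x (l - μ₁) = g x l - g x μ₁ := by simp [map_sub]
            rw [this] at hk'
            linarith
          exact ⟨k' + j - k, by rw [hsub, hxl, hk]; push_cast; ring⟩
    obtain ⟨m₀, hm₀S⟩ := hSne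
    have hm₀Λ := hSsub m₀ hm₀S
    obtain ⟨k₀, hk₀⟩ := hSpar m₀ hm₀S
    have hm₀mem : m₀ + δ ∈ lambda0 g Λ χ ∪ shiftSet S δ := Or.inr ⟨m₀, hm₀S, rfl⟩
    obtain ⟨t, ht⟩ := hx _ hm₀mem
    have htexp : g x m₀ + g χ x / 2 = (t : ℝ) := by
      have : g x (m₀ + δ) = g x m₀ + g x δ := by simp [map_add]
      rw [this, hyδ] at ht; exact ht
    rcases hstep with hxΛ | hxδΛ
    · -- x ∈ Λ
      rcases hΛsplit x hxΛ with he | ⟨k, hk⟩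
      · exact Or.inl ⟨hxΛ, he⟩
      · exfalso
        obtain ⟨A, hA⟩ := hΛpair x hxΛ m₀ hm₀Λ
        exact half_ne_int (A + k) t (by push_cast; rw [hA, hk] at htexp; linarith)
    · -- x = λ + δ with λ = x - δ ∈ Λ
      set lam := x - δ with hlam
      have hxeq : x = lam + δ := by rw [hlam]; abel
      obtain ⟨A, hA⟩ := hΛpair lam hxδΛ m₀ hm₀Λ
      have hgx : g x m₀ = (A : ℝ) + g χ m₀ / 2 := by
        rw [hxeq, map_add, LinearMap.add_apply, hA, hδy]
      have hgχx : g χ x = g χ lam + 2 * (d : ℝ) := by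
        have h1 : g χ (lam + δ) = g χ lam + g χ δ := by simp [map_add]
        have h2 : g χ δ = 2 * (d : ℝ) := by
          have h3 := hδy δ; rw [hd] at h3; linarith
        rw [hxeq, h1, h2]
      rcases hΛsplit lam hxδΛ with ⟨k, hk⟩ | ⟨k, hk⟩
      · -- χ⊘λ even
        rcases hp with hp0 | hp1
        · right
          exact ⟨lam, hSfull lam hxδΛ ⟨k, by rw [hp0]; push_cast; linarith [hk]⟩, hxeq.symm⟩
        · exfalso
          rw [hp1] at hk₀
          refine half_ne_int (A + k₀ + k + d) t ?_
          push_cast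
          push_cast at hk₀
          linarith [htexp, hgx, hgχx, hk, hk₀]
      · -- χ⊘λ odd
        rcases hp with hp0 | hp1
        · exfalso
          rw [hp0] at hk₀
          refine half_ne_int (A + k₀ + k + d) t ?_
          push_cast
          push_cast at hk₀
          linarith [htexp, hgx, hgχx, hk, hk₀]
        · right
          exact ⟨lam, hSfull lam hxδΛ ⟨k, by rw [hp1]; push_cast; linarith [hk]⟩, hxeq.symm⟩
  · -- L ⊆ dual
    intro hx l hl
    rcases hx with ⟨hxΛ, kx, hkx⟩ | ⟨mx, hmxS, hmx⟩
    · rcases hl with ⟨hlΛ, kl, hkl⟩ | ⟨ml, hmlS, hml⟩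
      · exact hΛpair x hxΛ l hlΛ
      · obtain ⟨A, hA⟩ := hΛpair x hxΛ ml (hSsub ml hmlS)
        refine ⟨A + kx, ?_⟩
        rw [← hml]
        have : g x (ml + δ) = g x ml + g x δ := by simp [map_add]
        rw [this, hA, hyδ, hkx]; push_cast; ring
    · rcases hl with ⟨hlΛ, kl, hkl⟩ | ⟨ml, hmlS, hml⟩
      · obtain ⟨A, hA⟩ := hΛpair mx (hSsub mx hmxS) l hlΛ
        refine ⟨A + kl, ?_⟩
        rw [← hmx, map_add, LinearMap.add_apply, hA, hδy, hkl]; push_cast; ring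
      · obtain ⟨A, hA⟩ := hΛpair mx (hSsub mx hmxS) ml (hSsub ml hmlS)
        obtain ⟨kx', hkx'⟩ := hSpar mx hmxS
        obtain ⟨kl', hkl'⟩ := hSpar ml hmlS
        refine ⟨A + kx' + kl' + p + d, ?_⟩
        rw [← hmx, ← hml]
        have : g (mx + δ) (ml + δ) = g mx ml + g mx δ + g δ ml + g δ δ := by
          simp [map_add]; ring
        have h1 : g mx δ = g χ mx / 2 := hyδ mx
        have h2 : g δ ml = g χ ml / 2 := hδy ml
        rw [this, hA, h1, h2, hd, hkx', hkl']
        push_cast; ring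

/-- The shifted lattice `Λ_O := Λ₀ ∪ Λ₃` is even self-dual with respect to `⊘`, and
the shifted lattice `Λ_NS := Λ₀ ∪ Λ₂` is odd self-dual with respect to `⊘`. -/
theorem statement6 {N : ℕ} (hN : 1 ≤ N)
    (g : LinearMap.BilinForm ℝ (Fin N → ℝ))
    (hsymm : ∀ x y, g x y = g y x)
    (hnondeg : ∀ x, (∀ y, g x y = 0) → x = 0)
    (Λ : AddSubgroup (Fin N → ℝ))
    (heven : ∀ l ∈ Λ, ∃ k : ℤ, g l l = 2 * (k : ℝ))
    (hselfdual : (Λ : Set (Fin N → ℝ)) = dualSet g (Λ : Set (Fin N → ℝ)))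
    (χ : Fin N → ℝ) (hχ : χ ∈ Λ)
    (δ : Fin N → ℝ) (hδdef : δ = (2 : ℝ)⁻¹ • χ)
    (hδnot : δ ∉ Λ)
    (hδint : ∃ k : ℤ, g δ δ = (k : ℝ))
    (Λ₂ Λ₃ : Set (Fin N → ℝ))
    (hcase0 : (∃ k : ℤ, g δ δ = 2 * (k : ℝ)) →
      Λ₂ = shiftSet (lambda1 g Λ χ) δ ∧ Λ₃ = shiftSet (lambda0 g Λ χ) δ)
    (hcase1 : (∃ k : ℤ, g δ δ = 2 * (k : ℝ) + 1) →
      Λ₂ = shiftSet (lambda0 g Λ χ) δ ∧ Λ₃ = shiftSet (lambda1 g Λ χ) δ) :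
    ((∀ l ∈ lambda0 g Λ χ ∪ Λ₃, ∃ k : ℤ, g l l = 2 * (k : ℝ)) ∧
      dualSet g (lambda0 g Λ χ ∪ Λ₃) = lambda0 g Λ χ ∪ Λ₃) ∧
    ((lambda0 g Λ χ ∪ Λ₂) ⊆ dualSet g (lambda0 g Λ χ ∪ Λ₂) ∧
      (∃ l ∈ lambda0 g Λ χ ∪ Λ₂, ∃ k : ℤ, g l l = 2 * (k : ℝ) + 1) ∧
      dualSet g (lambda0 g Λ χ ∪ Λ₂) = lambda0 g Λ χ ∪ Λ₂) := by
  have hδy : ∀ y, g δ y = g χ y / 2 := by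
    intro y; rw [hδdef]; simp [map_smul]; ring
  have hyδ : ∀ y, g y δ = g χ y / 2 := by
    intro y; rw [hsymm]; exact hδy y
  have hnorm : ∀ m : Fin N → ℝ, g (m + δ) (m + δ) = g m m + g χ m + g δ δ := by
    intro m
    have h1 : g (m + δ) (m + δ) = g m m + g m δ + g δ m + g δ δ := by
      simp [map_add]; ring
    rw [h1, hδy, hyδ]; ring
  -- instantiation data for S = lambda0
  have h0sub : ∀ m ∈ lambda0 g Λ χ, m ∈ Λ := fun m hm => hm.1
  have h0ne : ∃ m, m ∈ lambda0 g Λ χ := ⟨0, Λ.zero_mem, 0, by simp⟩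
  have h0par : ∀ m ∈ lambda0 g Λ χ, ∃ k : ℤ, g χ m = 2 * (k : ℝ) + (0 : ℤ) := by
    intro m hm; obtain ⟨_, k, hk⟩ := hm; exact ⟨k, by rw [hk]; push_cast; ring⟩
  have h0full : ∀ l ∈ Λ, (∃ k : ℤ, g χ l = 2 * (k : ℝ) + (0 : ℤ)) → l ∈ lambda0 g Λ χ := by
    intro l hl ⟨k, hk⟩; exact ⟨hl, k, by push_cast at hk; linarith⟩
  -- instantiation data for S = lambda1
  have h1sub : ∀ m ∈ lambda1 g Λ χ, m ∈ Λ := fun m hm => hm.1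
  have h1ne : ∃ m, m ∈ lambda1 g Λ χ := lambda1_ne g Λ hselfdual χ hχ δ hδdef hδnot
  have h1par : ∀ m ∈ lambda1 g Λ χ, ∃ k : ℤ, g χ m = 2 * (k : ℝ) + (1 : ℤ) := by
    intro m hm; obtain ⟨_, k, hk⟩ := hm; exact ⟨k, by rw [hk]; push_cast; ring⟩
  have h1full : ∀ l ∈ Λ, (∃ k : ℤ, g χ l = 2 * (k : ℝ) + (1 : ℤ)) → l ∈ lambda1 g Λ χ := by
    intro l hl ⟨k, hk⟩; exact ⟨hl, k, by push_cast at hk; linarith⟩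
  obtain ⟨dk, hdk⟩ := hδint
  rcases Int.even_or_odd dk with ⟨e, he⟩ | ⟨e, he⟩
  · -- g δ δ even
    have hdd : g δ δ = 2 * (e : ℝ) := by rw [hdk]; push_cast [he]; ring
    obtain ⟨hΛ2, hΛ3⟩ := hcase0 ⟨e, hdd⟩
    rw [hΛ2, hΛ3]
    refine ⟨⟨?_, ?_⟩, ?_, ?_, ?_⟩
    · -- evenness of Λ₀ ∪ shift Λ₀ δ
      rintro l (hl | ⟨m, ⟨hmΛ, k2, hk2⟩, rfl⟩)
      · exact heven l hl.1
      · obtain ⟨k1, hk1⟩ := heven m hmΛ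
        exact ⟨k1 + k2 + e, by rw [hnorm, hk1, hk2, hdd]; push_cast; ring⟩
    · exact selfdual_aux g hsymm Λ hselfdual χ hχ δ hδdef hδnot dk hdk
        (lambda0 g Λ χ) 0 (Or.inl rfl) h0sub h0ne h0par h0full
    · rw [selfdual_aux g hsymm Λ hselfdual χ hχ δ hδdef hδnot dk hdk
        (lambda1 g Λ χ) 1 (Or.inr rfl) h1sub h1ne h1par h1full]
    · obtain ⟨μ, hμ⟩ := h1ne
      obtain ⟨hμΛ, k2, hk2⟩ := hμ
      obtain ⟨k1, hk1⟩ := heven μ hμΛ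
      exact ⟨μ + δ, Or.inr ⟨μ, ⟨hμΛ, k2, hk2⟩, rfl⟩,
        k1 + k2 + e, by rw [hnorm, hk1, hk2, hdd]; push_cast; ring⟩
    · exact selfdual_aux g hsymm Λ hselfdual χ hχ δ hδdef hδnot dk hdk
        (lambda1 g Λ χ) 1 (Or.inr rfl) h1sub h1ne h1par h1full
  · -- g δ δ odd
    have hdd : g δ δ = 2 * (e : ℝ) + 1 := by rw [hdk]; push_cast [he]; ring
    obtain ⟨hΛ2, hΛ3⟩ := hcase1 ⟨e, hdd⟩
    rw [hΛ2, hΛ3]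
    refine ⟨⟨?_, ?_⟩, ?_, ?_, ?_⟩
    · rintro l (hl | ⟨m, ⟨hmΛ, k2, hk2⟩, rfl⟩)
      · exact heven l hl.1
      · obtain ⟨k1, hk1⟩ := heven m hmΛ
        exact ⟨k1 + k2 + e + 1, by rw [hnorm, hk1, hk2, hdd]; push_cast; ring⟩
    · exact selfdual_aux g hsymm Λ hselfdual χ hχ δ hδdef hδnot dk hdk
        (lambda1 g Λ χ) 1 (Or.inr rfl) h1sub h1ne h1par h1full
    · rw [selfdual_aux g hsymm Λ hselfdual χ hχ δ hδdef hδnot dk hdk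
        (lambda0 g Λ χ) 0 (Or.inl rfl) h0sub h0ne h0par h0full]
    · refine ⟨(0 : Fin N → ℝ) + δ, Or.inr ⟨0, ⟨Λ.zero_mem, 0, by simp⟩, rfl⟩, e, ?_⟩
      rw [hnorm, hdd]; simp
    · exact selfdual_aux g hsymm Λ hselfdual χ hχ δ hδdef hδnot dk hdk
        (lambda0 g Λ χ) 0 (Or.inl rfl) h0sub h0ne h0par h0full
end
end

section
/- Let p be an odd prime and let 𝒞 ⊆ (ℤ/p)^{2n} be a linear code that is self-dual with respect to the Lorentzian inner product η. Then the Construction A lattice Λ(𝒞) is even self-dual with respect to the real Lorentzian inner product ⊙. -/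
noncomputable section
open scoped BigOperators

/-- The Lorentzian inner product `x ⊙ y = Σᵢ (xᵢ y_{n+i} + x_{n+i} yᵢ)` on `ℝ^{2n}`,
with coordinates indexed by `Fin n ⊕ Fin n` (metric `η = [[0,Iₙ],[Iₙ,0]]`). -/
def lorR {n : ℕ} (x y : Fin n ⊕ Fin n → ℝ) : ℝ :=
  ∑ i : Fin n, (x (Sum.inl i) * y (Sum.inr i) + x (Sum.inr i) * y (Sum.inl i))

/-- The Lorentzian inner product on `(ℤ/p)^{2n}`. -/
def lorZmod {n p : ℕ} (x y : Fin n ⊕ Fin n → ZMod p) : ZMod p :=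
  ∑ i : Fin n, (x (Sum.inl i) * y (Sum.inr i) + x (Sum.inr i) * y (Sum.inl i))

/-- The componentwise lift of a codeword in `(ℤ/p)^{2n}` to `{0,…,p−1}^{2n} ⊆ ℝ^{2n}`. -/
def liftR {n p : ℕ} (c : Fin n ⊕ Fin n → ZMod p) : Fin n ⊕ Fin n → ℝ :=
  fun i => ((c i).val : ℝ)

/-- The Construction A lattice `Λ(𝒞) = {(c̃ + p·m)/√p : c ∈ 𝒞, m ∈ ℤ^{2n}} ⊆ ℝ^{2n}`. -/
def constrA {n : ℕ} (p : ℕ) (C : Set (Fin n ⊕ Fin n → ZMod p)) : Set (Fin n ⊕ Fin n → ℝ) :=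
  {x | ∃ c ∈ C, ∃ m : Fin n ⊕ Fin n → ℤ, x = fun i => (liftR c i + p * m i) / Real.sqrt p}

/-- The dual `L* = {x : x ⊙ l ∈ ℤ for all l ∈ L}` with respect to the Lorentzian
inner product. -/
def dualLor {n : ℕ} (L : Set (Fin n ⊕ Fin n → ℝ)) : Set (Fin n ⊕ Fin n → ℝ) :=
  {x | ∀ l ∈ L, ∃ k : ℤ, lorR x l = (k : ℝ)}

def lorI {n : ℕ} (a b : Fin n ⊕ Fin n → ℤ) : ℤ :=
  ∑ i : Fin n, (a (Sum.inl i) * b (Sum.inr i) + a (Sum.inr i) * b (Sum.inl i))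

lemma lorI_cast_zmod {n p : ℕ} (a b : Fin n ⊕ Fin n → ℤ) :
    ((lorI a b : ZMod p)) = lorZmod (fun i => (a i : ZMod p)) (fun i => (b i : ZMod p)) := by
  unfold lorI lorZmod; push_cast; ring

lemma lorR_div {n p : ℕ} (hp : 0 < p) (a b : Fin n ⊕ Fin n → ℤ) :
    lorR (fun i => (a i : ℝ) / Real.sqrt p) (fun i => (b i : ℝ) / Real.sqrt p)
      = (lorI a b : ℝ) / p := by
  have hppos : (0:ℝ) < p := by exact_mod_cast hp
  have hsp : Real.sqrt p * Real.sqrt p = p := Real.mul_self_sqrt hppos.le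
  unfold lorR lorI
  push_cast
  rw [Finset.sum_div]
  refine Finset.sum_congr rfl fun i _ => ?_
  rw [div_mul_div_comm, div_mul_div_comm, hsp, ← add_div]

lemma lorI_self_even {n : ℕ} (a : Fin n ⊕ Fin n → ℤ) :
    lorI a a = 2 * ∑ i : Fin n, a (Sum.inl i) * a (Sum.inr i) := by
  unfold lorI; rw [Finset.mul_sum]; exact Finset.sum_congr rfl fun i _ => by ring

/-- Let `p` be an odd prime and `𝒞 ⊆ (ℤ/p)^{2n}` a linear code self-dual with respect to
the Lorentzian inner product `η`. Then the Construction A lattice `Λ(𝒞)` is even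
self-dual with respect to the real Lorentzian inner product `⊙`. -/
theorem statement7 {n p : ℕ} (hn : 1 ≤ n) (hp : p.Prime) (hodd : Odd p)
    (C : Submodule (ZMod p) (Fin n ⊕ Fin n → ZMod p))
    (hsd : (C : Set (Fin n ⊕ Fin n → ZMod p)) = {v | ∀ c ∈ C, lorZmod v c = 0}) :
    (∀ l ∈ constrA p (C : Set (Fin n ⊕ Fin n → ZMod p)), ∃ k : ℤ, lorR l l = 2 * (k : ℝ)) ∧
    dualLor (constrA p (C : Set (Fin n ⊕ Fin n → ZMod p)))
      = constrA p (C : Set (Fin n ⊕ Fin n → ZMod p)) := by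
  have hp0 : 0 < p := hp.pos
  haveI : NeZero p := ⟨hp0.ne'⟩
  have hppos : (0:ℝ) < p := by exact_mod_cast hp0
  have hpne : (p:ℝ) ≠ 0 := ne_of_gt hppos
  have hsp : Real.sqrt p * Real.sqrt p = p := Real.mul_self_sqrt hppos.le
  have hspne : Real.sqrt p ≠ 0 := by positivity
  -- codewords pair to zero
  have hzero : ∀ c ∈ C, ∀ c' ∈ C, lorZmod c c' = 0 := by
    intro c hc c' hc'
    have h : c ∈ {v | ∀ c ∈ C, lorZmod v c = 0} := hsd ▸ hc
    exact h c' hc'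
  -- rewriting a lattice element in integer-vector form
  have hform : ∀ (c : Fin n ⊕ Fin n → ZMod p) (m : Fin n ⊕ Fin n → ℤ),
      (fun i => (liftR c i + p * m i) / Real.sqrt p)
        = fun i => (((((c i).val : ℤ) + p * m i : ℤ)) : ℝ) / Real.sqrt p := by
    intro c m; funext i; unfold liftR; congr 1; push_cast; ring
  -- reduction of these integer vectors mod p
  have hbar : ∀ (c : Fin n ⊕ Fin n → ZMod p) (m : Fin n ⊕ Fin n → ℤ),
      (fun i => ((((c i).val : ℤ) + p * m i : ℤ) : ZMod p)) = c := by
    intro c m; funext i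
    push_cast
    simp [ZMod.natCast_val, ZMod.cast_id, ZMod.natCast_self]
  -- generic integrality of pairings of lattice elements
  have hpair : ∀ c ∈ C, ∀ c' ∈ C, ∀ (m m' : Fin n ⊕ Fin n → ℤ),
      (p:ℤ) ∣ lorI (fun i => ((c i).val : ℤ) + p * m i) (fun i => ((c' i).val : ℤ) + p * m' i) := by
    intro c hc c' hc' m m'
    rw [← ZMod.intCast_zmod_eq_zero_iff_dvd, lorI_cast_zmod, hbar, hbar]
    exact hzero c hc c' hc'
  constructor
  · -- evenness
    rintro l ⟨c, hc, m, rfl⟩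
    set v : Fin n ⊕ Fin n → ℤ := fun i => ((c i).val : ℤ) + p * m i with hv
    rw [hform, lorR_div hp0]
    have hdvd : (p:ℤ) ∣ lorI v v := hpair c hc c hc m m
    obtain ⟨S, hS⟩ : ∃ S, lorI v v = 2 * S := ⟨_, lorI_self_even v⟩
    have hpS : (p:ℤ) ∣ S := by
      have hprime : Prime (p:ℤ) := Nat.prime_iff_prime_int.mp hp
      rcases hprime.dvd_mul.mp (hS ▸ hdvd) with h2 | h
      · exfalso
        have h2' : p ∣ 2 := by exact_mod_cast h2
        have hp2 : p = 2 := (Nat.prime_dvd_prime_iff_eq hp Nat.prime_two).mp h2'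
        rw [hp2] at hodd
        exact absurd hodd (by decide)
      · exact h
    obtain ⟨k, hk⟩ := hpS
    refine ⟨k, ?_⟩
    rw [hS, hk]
    push_cast
    field_simp
  · apply Set.Subset.antisymm
    · -- dual ⊆ lattice
      intro x hx
      -- Step A: each coordinate times √p is an integer
      have stepA : ∀ i : Fin n ⊕ Fin n, ∃ k : ℤ, x i = (k : ℝ) / Real.sqrt p := by
        intro i
        set m₀ : Fin n ⊕ Fin n → ℤ := fun j => if j = Sum.swap i then 1 else 0 with hm₀
        have hel : (fun j => (liftR (0 : Fin n ⊕ Fin n → ZMod p) j + p * m₀ j) / Real.sqrt p)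
            ∈ constrA p (C : Set (Fin n ⊕ Fin n → ZMod p)) :=
          ⟨0, C.zero_mem, m₀, rfl⟩
        obtain ⟨k, hk⟩ := hx _ hel
        refine ⟨k, ?_⟩
        have heval : lorR x (fun j => (liftR (0 : Fin n ⊕ Fin n → ZMod p) j + p * m₀ j) / Real.sqrt p)
            = x i * Real.sqrt p := by
          have hej : ∀ j, (liftR (0 : Fin n ⊕ Fin n → ZMod p) j + p * m₀ j) / Real.sqrt p
              = Real.sqrt p * (if j = Sum.swap i then 1 else 0) := by
            intro j
            simp only [liftR, hm₀, Pi.zero_apply, ZMod.val_zero, Nat.cast_zero, zero_add]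
            split_ifs with h
            · push_cast
              rw [div_eq_iff hspne]
              nlinarith [hsp]
            · simp
          simp only [lorR, hej]
          cases i with
          | inl a =>
            simp [Sum.swap, mul_ite, Finset.sum_ite_eq', mul_comm]
          | inr a =>
            simp [Sum.swap, mul_ite, Finset.sum_ite_eq', mul_comm]
        rw [heval] at hk
        field_simp [hk]
        exact hk
      choose w hw using stepA
      have hxw : x = fun i => (w i : ℝ) / Real.sqrt p := funext hw
      -- Step C: the reduction of w mod p lies in C
      set cbar : Fin n ⊕ Fin n → ZMod p := fun i => ((w i : ZMod p)) with hcbar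
      have hcbarC : cbar ∈ C := by
        rw [← SetLike.mem_coe, hsd]
        intro c' hc'
        obtain ⟨m₀, hm₀⟩ : ∃ m₀ : Fin n ⊕ Fin n → ℤ, m₀ = fun _ => 0 := ⟨_, rfl⟩
        have hel : (fun j => (liftR c' j + p * m₀ j) / Real.sqrt p)
            ∈ constrA p (C : Set (Fin n ⊕ Fin n → ZMod p)) := ⟨c', hc', m₀, rfl⟩
        obtain ⟨k, hk⟩ := hx _ hel
        rw [hxw, hform c' m₀, lorR_div hp0] at hk
        have hint : lorI w (fun i => ((c' i).val : ℤ) + p * m₀ i) = k * p := by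
          rw [div_eq_iff hpne] at hk
          exact_mod_cast hk
        have : ((lorI w (fun i => ((c' i).val : ℤ) + p * m₀ i) : ZMod p)) = 0 := by
          rw [hint]; push_cast; simp
        rw [lorI_cast_zmod, hbar] at this
        exact this
      -- Step D: assemble membership
      have hdvd : ∀ i, (p:ℤ) ∣ (w i - ((cbar i).val : ℤ)) := by
        intro i
        rw [← ZMod.intCast_zmod_eq_zero_iff_dvd]
        push_cast
        simp [hcbar, ZMod.natCast_val, ZMod.cast_id]
      refine ⟨cbar, hcbarC, fun i => (w i - ((cbar i).val : ℤ)) / p, ?_⟩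
      funext i
      rw [hw i]
      congr 1
      have hmul : (p:ℤ) * ((w i - ((cbar i).val : ℤ)) / p) = w i - ((cbar i).val : ℤ) :=
        Int.mul_ediv_cancel' (hdvd i)
      have : (p:ℝ) * (((w i - ((cbar i).val : ℤ)) / p : ℤ) : ℝ) = ((w i : ℝ)) - ((cbar i).val : ℝ) := by
        exact_mod_cast congrArg (fun z : ℤ => (z:ℝ)) hmul
      rw [liftR, this]
      ring
    · -- lattice ⊆ dual
      rintro x ⟨c, hc, m, rfl⟩ l ⟨c', hc', m', rfl⟩
      rw [hform, hform, lorR_div hp0]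
      obtain ⟨k, hk⟩ := hpair c hc c' hc' m m'
      refine ⟨k, ?_⟩
      rw [hk]
      push_cast
      field_simp
end
end

section
/- Let 𝒞 ⊆ (ℤ/2)^{2n} be a linear code that is doubly-even and self-dual with respect to the Lorentzian inner product η (doubly-even meaning c̃ ⊙ c̃ ∈ 4ℤ for every c ∈ 𝒞, where c̃ ∈ {0,1}^{2n} is the integer lift). Then the Construction A lattice Λ(𝒞) is even self-dual with respect to the real Lorentzian inner product ⊙. -/
noncomputable section
open scoped BigOperators

/-- The componentwise integer lift of a codeword. -/
def liftZ {n p : ℕ} (c : Fin n ⊕ Fin n → ZMod p) : Fin n ⊕ Fin n → ℤ :=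
  fun i => ((c i).val : ℤ)

/-- The Lorentzian inner product on `ℤ^{2n}`. -/
def lorInt {n : ℕ} (x y : Fin n ⊕ Fin n → ℤ) : ℤ :=
  ∑ i : Fin n, (x (Sum.inl i) * y (Sum.inr i) + x (Sum.inr i) * y (Sum.inl i))

lemma lorInt_comm {n : ℕ} (a b : Fin n ⊕ Fin n → ℤ) : lorInt a b = lorInt b a := by
  unfold lorInt; exact Finset.sum_congr rfl fun i _ => by ring

lemma lorInt_expand {n : ℕ} (a b m m' : Fin n ⊕ Fin n → ℤ) :
    lorInt (fun i => a i + 2 * m i) (fun i => b i + 2 * m' i)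
      = lorInt a b + 2 * lorInt a m' + 2 * lorInt m b + 4 * lorInt m m' := by
  simp only [lorInt, Finset.mul_sum, ← Finset.sum_add_distrib]
  exact Finset.sum_congr rfl fun i _ => by ring

lemma lorR_int {n : ℕ} (a b : Fin n ⊕ Fin n → ℤ) :
    lorR (fun i => (a i : ℝ) / Real.sqrt 2) (fun i => (b i : ℝ) / Real.sqrt 2)
      = (lorInt a b : ℝ) / 2 := by
  have hs : Real.sqrt 2 * Real.sqrt 2 = 2 := Real.mul_self_sqrt (by norm_num)
  unfold lorR lorInt
  push_cast
  rw [Finset.sum_div]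
  refine Finset.sum_congr rfl fun i _ => ?_
  rw [div_mul_div_comm, div_mul_div_comm, hs, ← add_div]

lemma lorInt_cast {n : ℕ} (a b : Fin n ⊕ Fin n → ℤ) :
    ((lorInt a b : ℤ) : ZMod 2)
      = lorZmod (fun i => ((a i : ℤ) : ZMod 2)) (fun i => ((b i : ℤ) : ZMod 2)) := by
  unfold lorInt lorZmod; push_cast; rfl

lemma liftZ_cast {n : ℕ} (c : Fin n ⊕ Fin n → ZMod 2) (i : Fin n ⊕ Fin n) :
    ((liftZ c i : ℤ) : ZMod 2) = c i := by
  simp [liftZ, ZMod.natCast_val, ZMod.cast_id]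

/-- Let `𝒞 ⊆ (ℤ/2)^{2n}` be a linear code that is doubly-even (`c̃ ⊙ c̃ ∈ 4ℤ` for every
`c ∈ 𝒞`) and self-dual with respect to the Lorentzian inner product `η`. Then the
Construction A lattice `Λ(𝒞)` is even self-dual with respect to `⊙`. -/
theorem statement8 {n : ℕ} (hn : 1 ≤ n)
    (C : Submodule (ZMod 2) (Fin n ⊕ Fin n → ZMod 2))
    (hde : ∀ c ∈ C, (4 : ℤ) ∣ lorInt (liftZ c) (liftZ c))
    (hsd : (C : Set (Fin n ⊕ Fin n → ZMod 2)) = {v | ∀ c ∈ C, lorZmod v c = 0}) :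
    (∀ l ∈ constrA 2 (C : Set (Fin n ⊕ Fin n → ZMod 2)), ∃ k : ℤ, lorR l l = 2 * (k : ℝ)) ∧
    dualLor (constrA 2 (C : Set (Fin n ⊕ Fin n → ZMod 2)))
      = constrA 2 (C : Set (Fin n ⊕ Fin n → ZMod 2)) := by
  have hs : Real.sqrt 2 * Real.sqrt 2 = 2 := Real.mul_self_sqrt (by norm_num)
  have hs0 : Real.sqrt 2 ≠ 0 := by positivity
  -- normal form for lattice membership
  have hmem : ∀ x : Fin n ⊕ Fin n → ℝ,
      x ∈ constrA 2 (C : Set (Fin n ⊕ Fin n → ZMod 2)) ↔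
        ∃ c ∈ C, ∃ m : Fin n ⊕ Fin n → ℤ,
          x = fun i => ((liftZ c i + 2 * m i : ℤ) : ℝ) / Real.sqrt 2 := by
    intro x
    constructor
    · rintro ⟨c, hc, m, rfl⟩
      exact ⟨c, hc, m, funext fun i => by push_cast [liftR, liftZ]; norm_num⟩
    · rintro ⟨c, hc, m, rfl⟩
      exact ⟨c, hc, m, funext fun i => by push_cast [liftR, liftZ]; norm_num⟩
  -- orthogonality of codewords over ℤ
  have horth : ∀ c ∈ C, ∀ c' ∈ C, (2 : ℤ) ∣ lorInt (liftZ c) (liftZ c') := by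
    intro c hc c' hc'
    have hmem' : c ∈ {v | ∀ c ∈ C, lorZmod v c = 0} := hsd ▸ hc
    have h0 : lorZmod c c' = 0 := hmem' c' hc'
    have h1 : ((lorInt (liftZ c) (liftZ c') : ℤ) : ZMod 2) = 0 := by
      rw [lorInt_cast]
      simpa only [liftZ_cast] using h0
    exact (ZMod.intCast_zmod_eq_zero_iff_dvd _ 2).mp h1
  -- integrality of pairings in the lattice
  have hint : ∀ l ∈ constrA 2 (C : Set (Fin n ⊕ Fin n → ZMod 2)),
      ∀ l' ∈ constrA 2 (C : Set (Fin n ⊕ Fin n → ZMod 2)), ∃ k : ℤ, lorR l l' = (k : ℝ) := by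
    intro l hl l' hl'
    obtain ⟨c, hc, m, rfl⟩ := (hmem l).mp hl
    obtain ⟨c', hc', m', rfl⟩ := (hmem l').mp hl'
    obtain ⟨t, ht⟩ := horth c hc c' hc'
    refine ⟨t + lorInt (liftZ c) m' + lorInt m (liftZ c') + 2 * lorInt m m', ?_⟩
    have h1 : lorR (fun i => ((liftZ c i + 2 * m i : ℤ) : ℝ) / Real.sqrt 2)
        (fun i => ((liftZ c' i + 2 * m' i : ℤ) : ℝ) / Real.sqrt 2)
        = ((lorInt (fun i => liftZ c i + 2 * m i) (fun i => liftZ c' i + 2 * m' i) : ℤ) : ℝ) / 2 :=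
      lorR_int _ _
    have hy : lorInt (fun i => liftZ c i + 2 * m i) (fun i => liftZ c' i + 2 * m' i)
        = 2 * (t + lorInt (liftZ c) m' + lorInt m (liftZ c') + 2 * lorInt m m') := by
      rw [lorInt_expand, ht]; ring
    rw [h1, hy]; push_cast; ring
  refine ⟨?_, ?_⟩
  · -- evenness
    intro l hl
    obtain ⟨c, hc, m, rfl⟩ := (hmem l).mp hl
    obtain ⟨K, hK⟩ := hde c hc
    refine ⟨K + lorInt (liftZ c) m + lorInt m m, ?_⟩
    have h1 : lorR (fun i => ((liftZ c i + 2 * m i : ℤ) : ℝ) / Real.sqrt 2)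
        (fun i => ((liftZ c i + 2 * m i : ℤ) : ℝ) / Real.sqrt 2)
        = ((lorInt (fun i => liftZ c i + 2 * m i) (fun i => liftZ c i + 2 * m i) : ℤ) : ℝ) / 2 :=
      lorR_int _ _
    have hy : lorInt (fun i => liftZ c i + 2 * m i) (fun i => liftZ c i + 2 * m i)
        = 4 * (K + lorInt (liftZ c) m + lorInt m m) := by
      rw [lorInt_expand, hK, lorInt_comm m (liftZ c)]; ring
    rw [h1, hy]; push_cast; ring
  · -- self-duality
    ext x
    constructor
    · intro hx
      -- coordinates of x times √2 are integers (pair against √2 · eⱼ)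
      have hxj : ∀ j : Fin n ⊕ Fin n, ∃ k : ℤ, x j * Real.sqrt 2 = (k : ℝ) := by
        intro j
        set mj : Fin n ⊕ Fin n → ℤ := fun i => if i = Sum.swap j then 1 else 0 with hmj
        have hl : (fun i => ((liftZ (0 : Fin n ⊕ Fin n → ZMod 2) i + 2 * mj i : ℤ) : ℝ)
            / Real.sqrt 2) ∈ constrA 2 (C : Set (Fin n ⊕ Fin n → ZMod 2)) :=
          (hmem _).mpr ⟨0, C.zero_mem, mj, rfl⟩
        obtain ⟨k, hk⟩ := hx _ hl
        refine ⟨k, ?_⟩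
        rw [← hk]
        have hl0 : ∀ i, ((liftZ (0 : Fin n ⊕ Fin n → ZMod 2) i + 2 * mj i : ℤ) : ℝ) / Real.sqrt 2
            = if i = Sum.swap j then Real.sqrt 2 else 0 := by
          intro i
          by_cases h : i = Sum.swap j <;>
            simp [hmj, h, liftZ, div_eq_iff hs0, hs]
        unfold lorR
        rcases j with i0 | i0
        · simp only [hl0, Sum.swap_inl]
          simp [Finset.sum_ite_eq', mul_ite, mul_zero]
        · simp only [hl0, Sum.swap_inr]
          simp [Finset.sum_ite_eq', mul_ite, mul_zero]
      choose y hy using hxj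
      have hxy : x = fun i => (y i : ℝ) / Real.sqrt 2 :=
        funext fun i => by rw [eq_div_iff hs0, hy]
      -- the reduction of y mod 2 lies in C
      set v : Fin n ⊕ Fin n → ZMod 2 := fun i => ((y i : ℤ) : ZMod 2) with hv
      have hvC : v ∈ C := by
        rw [← SetLike.mem_coe, hsd]
        intro c hc
        have hl : (fun i => ((liftZ c i + 2 * (fun _ : Fin n ⊕ Fin n => (0:ℤ)) i : ℤ) : ℝ)
            / Real.sqrt 2) ∈ constrA 2 (C : Set (Fin n ⊕ Fin n → ZMod 2)) :=
          (hmem _).mpr ⟨c, hc, _, rfl⟩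
        obtain ⟨k, hk⟩ := hx _ hl
        have h1 : lorR x (fun i => ((liftZ c i + 2 * (fun _ : Fin n ⊕ Fin n => (0:ℤ)) i : ℤ) : ℝ)
            / Real.sqrt 2)
            = ((lorInt y (fun i => liftZ c i + 2 * 0) : ℤ) : ℝ) / 2 := by
          rw [hxy]; exact lorR_int _ _
        have h2 : lorInt y (fun i => liftZ c i + 2 * 0) = lorInt y (liftZ c) := by
          simp [lorInt]
        rw [h1, h2] at hk
        have h3 : lorInt y (liftZ c) = 2 * k := by
          have : ((lorInt y (liftZ c) : ℤ) : ℝ) = 2 * k := by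
            field_simp at hk; linarith
          exact_mod_cast this
        have h4 : ((lorInt y (liftZ c) : ℤ) : ZMod 2) = 0 := by
          have h20 : ((2 : ℤ) : ZMod 2) = 0 := by decide
          rw [h3, Int.cast_mul, h20, zero_mul]
        rw [lorInt_cast] at h4
        simpa only [liftZ_cast] using h4
      -- write x as lattice vector over v
      refine (hmem x).mpr ⟨v, hvC, fun i => (y i - liftZ v i) / 2, ?_⟩
      rw [hxy]
      funext i
      have hdvd : (2 : ℤ) ∣ y i - liftZ v i := by
        have : ((y i - liftZ v i : ℤ) : ZMod 2) = 0 := by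
          push_cast [liftZ_cast]
          simp [hv]
        exact (ZMod.intCast_zmod_eq_zero_iff_dvd _ 2).mp this
      have hZ : liftZ v i + 2 * ((y i - liftZ v i) / 2) = y i := by
        rw [Int.mul_ediv_cancel' hdvd]; ring
      rw [hZ]
    · intro hx
      intro l hl
      exact hint x hx l hl
end
end

section
/- Let p be a prime, C ⊆ (ℤ/p)^n a linear code, and C^⊥ := {v ∈ (ℤ/p)^n : Σ_{i=1}^n v_i c_i = 0 for all c ∈ C} its Euclidean dual. Let 𝒞 := C^⊥ × C := {(α, β) ∈ (ℤ/p)^{2n} : α ∈ C^⊥, β ∈ C} (the code generated by the CSS check matrix [H_C 0; 0 G_C]). Then the Construction A lattice Λ(𝒞) is even self-dual with respect to the real Lorentzian inner product ⊙. -/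
noncomputable section
open scoped BigOperators

/-- The Euclidean dual `C^⊥ = {v : Σᵢ vᵢ cᵢ = 0 for all c ∈ C}` of a linear code
`C ⊆ (ℤ/p)^n`. -/
def euclDual {n p : ℕ} (C : Set (Fin n → ZMod p)) : Set (Fin n → ZMod p) :=
  {v | ∀ c ∈ C, ∑ i : Fin n, v i * c i = 0}

namespace S9

def lorZInt {n : ℕ} (x y : Fin n ⊕ Fin n → ℤ) : ℤ :=
  ∑ i : Fin n, (x (Sum.inl i) * y (Sum.inr i) + x (Sum.inr i) * y (Sum.inl i))

lemma lorR_div_sqrt {n p : ℕ} (hp : 0 < p) (y z : Fin n ⊕ Fin n → ℤ) :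
    lorR (fun i => (y i : ℝ) / Real.sqrt p) (fun i => (z i : ℝ) / Real.sqrt p)
      = (lorZInt y z : ℝ) / p := by
  have hps : Real.sqrt p * Real.sqrt p = (p : ℝ) := Real.mul_self_sqrt (by positivity)
  unfold lorR lorZInt
  push_cast
  rw [Finset.sum_div]
  refine Finset.sum_congr rfl fun i _ => ?_
  rw [div_mul_div_comm, div_mul_div_comm, hps, add_div]

lemma cast_lorZInt {n p : ℕ} (y z : Fin n ⊕ Fin n → ℤ) :
    ((lorZInt y z : ℤ) : ZMod p)
      = lorZmod (fun i => ((y i : ZMod p))) (fun i => ((z i : ZMod p))) := by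
  unfold lorZInt lorZmod
  push_cast
  rfl

lemma mem_constrA_iff {n p : ℕ} [NeZero p] {CC : Set (Fin n ⊕ Fin n → ZMod p)}
    {x : Fin n ⊕ Fin n → ℝ} :
    x ∈ constrA p CC ↔ ∃ y : Fin n ⊕ Fin n → ℤ,
      (fun i => ((y i : ℤ) : ZMod p)) ∈ CC ∧ x = fun i => (y i : ℝ) / Real.sqrt p := by
  constructor
  · rintro ⟨c, hc, m, rfl⟩
    refine ⟨fun i => ((c i).val : ℤ) + p * m i, ?_, ?_⟩
    · have : (fun i => ((((c i).val : ℤ) + p * m i : ℤ) : ZMod p)) = c := by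
        funext i
        push_cast
        simp [ZMod.natCast_val, ZMod.cast_id]
      rw [this]; exact hc
    · funext i
      unfold liftR
      push_cast
      ring_nf
  · rintro ⟨y, hy, rfl⟩
    refine ⟨fun i => ((y i : ZMod p)), hy, fun i => (y i - (((y i : ZMod p)).val : ℤ)) / p, ?_⟩
    funext i
    have hdvd : (p : ℤ) ∣ y i - (((y i : ZMod p)).val : ℤ) := by
      rw [← ZMod.intCast_zmod_eq_zero_iff_dvd]
      push_cast
      simp [ZMod.natCast_val, ZMod.cast_id]
    have : (p : ℤ) * ((y i - (((y i : ZMod p)).val : ℤ)) / p) = y i - (((y i : ZMod p)).val : ℤ) :=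
      Int.mul_ediv_cancel' hdvd
    unfold liftR
    have hsne : Real.sqrt p ≠ 0 := by
      have h0 : (0:ℝ) < p := by exact_mod_cast Nat.pos_of_ne_zero (NeZero.ne p)
      positivity
    rw [div_eq_div_iff hsne hsne]
    have := congrArg (fun t : ℤ => (t : ℝ)) this
    push_cast at this ⊢
    rw [this]; ring

def dotForm (p n : ℕ) : LinearMap.BilinForm (ZMod p) (Fin n → ZMod p) :=
  LinearMap.mk₂ (ZMod p) (fun v w => ∑ i : Fin n, v i * w i)
    (fun m₁ m₂ nn => by simp [add_mul, Finset.sum_add_distrib])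
    (fun c m nn => by simp [Finset.mul_sum, mul_assoc])
    (fun m n₁ n₂ => by simp [mul_add, Finset.sum_add_distrib])
    (fun c m nn => by simp [Finset.mul_sum, mul_left_comm])

lemma dotForm_apply {p n : ℕ} (v w : Fin n → ZMod p) :
    dotForm p n v w = ∑ i : Fin n, v i * w i := rfl

lemma euclDual_coe {p n : ℕ} [Fact p.Prime] (N : Submodule (ZMod p) (Fin n → ZMod p)) :
    euclDual (N : Set (Fin n → ZMod p)) = (((dotForm p n).orthogonal N : Submodule (ZMod p) (Fin n → ZMod p)) : Set (Fin n → ZMod p)) := by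
  ext v
  constructor
  · intro hv w hw
    show dotForm p n w v = 0
    rw [dotForm_apply]
    rw [Finset.sum_congr rfl fun i _ => mul_comm (w i) (v i)]
    exact hv w hw
  · intro hv w hw
    have := hv w hw
    rw [dotForm_apply] at this
    rw [Finset.sum_congr rfl fun i _ => mul_comm (v i) (w i)]
    exact this

lemma euclDual_euclDual {p n : ℕ} [Fact p.Prime] (C : Submodule (ZMod p) (Fin n → ZMod p)) :
    euclDual (euclDual (C : Set (Fin n → ZMod p))) = (C : Set (Fin n → ZMod p)) := by
  have hnd : (dotForm p n).Nondegenerate := by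
    refine ⟨fun v hv => ?_, fun v hv => ?_⟩ <;>
    · funext i
      have := hv (Pi.single i 1)
      rw [dotForm_apply] at this
      simpa [Pi.single_apply, Finset.sum_ite_eq', Finset.sum_ite_eq] using this
  have hrefl : (dotForm p n).IsRefl := by
    intro v w h
    rw [dotForm_apply] at h ⊢
    rw [Finset.sum_congr rfl fun i _ => mul_comm (w i) (v i)]
    exact h
  rw [euclDual_coe C, euclDual_coe, LinearMap.BilinForm.orthogonal_orthogonal hnd hrefl]

end S9

open S9

/-- Let `p` be a prime, `C ⊆ (ℤ/p)^n` a linear code, and `C^⊥` its Euclidean dual. Let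
`𝒞 := C^⊥ × C` (the code generated by the CSS check matrix `[H_C 0; 0 G_C]`). Then the
Construction A lattice `Λ(𝒞)` is even self-dual with respect to the real Lorentzian
inner product `⊙`. -/
theorem statement9 {n p : ℕ} (hn : 1 ≤ n) (hp : p.Prime)
    (C : Submodule (ZMod p) (Fin n → ZMod p)) :
    let CC : Set (Fin n ⊕ Fin n → ZMod p) :=
      {c | (fun i => c (Sum.inl i)) ∈ euclDual (C : Set (Fin n → ZMod p)) ∧
           (fun i => c (Sum.inr i)) ∈ C}
    (∀ l ∈ constrA p CC, ∃ k : ℤ, lorR l l = 2 * (k : ℝ)) ∧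
    dualLor (constrA p CC) = constrA p CC := by
  haveI : Fact p.Prime := ⟨hp⟩
  haveI : NeZero p := ⟨hp.ne_zero⟩
  intro CC
  have hp0 : 0 < p := hp.pos
  have hpR : (0:ℝ) < p := by exact_mod_cast hp0
  have hpne : (p:ℝ) ≠ 0 := ne_of_gt hpR
  have hsne : Real.sqrt p ≠ 0 := by positivity
  have hpair : ∀ c ∈ CC, ∀ c' ∈ CC, lorZmod c c' = 0 := by
    rintro c ⟨hc1, hc2⟩ c' ⟨hc1', hc2'⟩
    have h1 : ∑ i : Fin n, c (Sum.inl i) * c' (Sum.inr i) = 0 := hc1 _ hc2'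
    have h2 : ∑ i : Fin n, c' (Sum.inl i) * c (Sum.inr i) = 0 := hc1' _ hc2
    unfold lorZmod
    rw [Finset.sum_add_distrib, h1, zero_add,
      Finset.sum_congr rfl fun i _ => mul_comm (c (Sum.inr i)) (c' (Sum.inl i)), h2]
  have hdvd : ∀ y z : Fin n ⊕ Fin n → ℤ,
      (fun i => ((y i : ZMod p))) ∈ CC → (fun i => ((z i : ZMod p))) ∈ CC →
      ∃ k : ℤ, lorZInt y z = p * k := by
    intro y z hy hz
    have h0 : ((lorZInt y z : ℤ) : ZMod p) = 0 := by
      rw [cast_lorZInt]; exact hpair _ hy _ hz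
    exact (ZMod.intCast_zmod_eq_zero_iff_dvd _ _).mp h0
  constructor
  · -- evenness
    intro l hl
    obtain ⟨y, hy, rfl⟩ := mem_constrA_iff.mp hl
    have hSmod : ((∑ i : Fin n, y (Sum.inl i) * y (Sum.inr i) : ℤ) : ZMod p) = 0 := by
      push_cast
      exact hy.1 _ hy.2
    obtain ⟨t, ht⟩ := (ZMod.intCast_zmod_eq_zero_iff_dvd _ _).mp hSmod
    refine ⟨t, ?_⟩
    rw [lorR_div_sqrt hp0]
    have h2 : lorZInt y y = 2 * (∑ i : Fin n, y (Sum.inl i) * y (Sum.inr i)) := by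
      unfold lorZInt
      rw [Finset.sum_add_distrib, two_mul,
        Finset.sum_congr rfl fun i _ => mul_comm (y (Sum.inr i)) (y (Sum.inl i))]
    rw [h2, ht]
    push_cast
    field_simp
  · ext x
    constructor
    · intro hx
      -- Step 1: √p · x is integral
      have hint : ∀ j : Fin n ⊕ Fin n, ∃ k : ℤ, Real.sqrt p * x j = (k : ℝ) := by
        intro j
        set z : Fin n ⊕ Fin n → ℤ := fun i => if i = Sum.swap j then (p:ℤ) else 0 with hzdef
        have hzred : (fun i => ((z i : ZMod p))) ∈ CC := by
          have hz0 : (fun i => ((z i : ZMod p))) = fun _ => (0 : ZMod p) := by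
            funext i
            by_cases h : i = Sum.swap j <;> simp [hzdef, h]
          rw [hz0]
          exact ⟨fun c' _ => by simp, C.zero_mem⟩
        obtain ⟨k, hk⟩ := hx _ (mem_constrA_iff.mpr ⟨z, hzred, rfl⟩)
        refine ⟨k, ?_⟩
        rw [← hk]
        have hdiv : ((p:ℤ):ℝ) / Real.sqrt p = Real.sqrt p := by
          push_cast; exact Real.div_sqrt
        cases j with
        | inl j0 =>
          have hterm : ∀ i : Fin n,
              x (Sum.inl i) * ((z (Sum.inr i) : ℝ) / Real.sqrt p)
                + x (Sum.inr i) * ((z (Sum.inl i) : ℝ) / Real.sqrt p)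
              = if i = j0 then Real.sqrt p * x (Sum.inl j0) else 0 := by
            intro i
            by_cases h : i = j0
            · subst h
              simp [hzdef, hdiv, mul_comm]
            · simp [hzdef, h]
          unfold lorR
          rw [Finset.sum_congr rfl fun i _ => hterm i,
            Finset.sum_ite_eq' Finset.univ j0 (fun _ => Real.sqrt p * x (Sum.inl j0))]
          simp
        | inr j0 =>
          have hterm : ∀ i : Fin n,
              x (Sum.inl i) * ((z (Sum.inr i) : ℝ) / Real.sqrt p)
                + x (Sum.inr i) * ((z (Sum.inl i) : ℝ) / Real.sqrt p)
              = if i = j0 then Real.sqrt p * x (Sum.inr j0) else 0 := by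
            intro i
            by_cases h : i = j0
            · subst h
              simp [hzdef, hdiv, mul_comm]
            · simp [hzdef, h]
          unfold lorR
          rw [Finset.sum_congr rfl fun i _ => hterm i,
            Finset.sum_ite_eq' Finset.univ j0 (fun _ => Real.sqrt p * x (Sum.inr j0))]
          simp
      choose Y hY using hint
      have hxY : x = fun i => (Y i : ℝ) / Real.sqrt p := by
        funext i
        rw [← hY i]
        field_simp
      -- Step 2: the reduction pairs to zero with every codeword
      have hkey : ∀ c' ∈ CC, lorZmod (fun i => ((Y i : ZMod p))) c' = 0 := by
        intro c' hc'
        have hzred : (fun i => ((((c' i).val : ℤ) : ZMod p))) = c' := by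
          funext i
          push_cast
          simp [ZMod.natCast_val, ZMod.cast_id]
        have hmem : (fun i => (((c' i).val : ℤ) : ℝ) / Real.sqrt p) ∈ constrA p CC :=
          mem_constrA_iff.mpr ⟨fun i => ((c' i).val : ℤ), by rw [hzred]; exact hc', rfl⟩
        obtain ⟨k, hk⟩ := hx _ hmem
        rw [hxY, lorR_div_sqrt hp0, div_eq_iff hpne] at hk
        have hZ : lorZInt Y (fun i => ((c' i).val : ℤ)) = k * p := by exact_mod_cast hk
        have h0 : ((lorZInt Y (fun i => ((c' i).val : ℤ)) : ℤ) : ZMod p) = 0 := by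
          rw [hZ]; push_cast; simp
        rw [cast_lorZInt, hzred] at h0
        exact h0
      have hα : (fun i => ((Y (Sum.inl i) : ZMod p))) ∈ euclDual (C : Set (Fin n → ZMod p)) := by
        intro w hw
        have hmem : (Sum.elim 0 w : Fin n ⊕ Fin n → ZMod p) ∈ CC := by
          refine ⟨fun c' _ => by simp, ?_⟩
          have : (fun i => Sum.elim (0 : Fin n → ZMod p) w (Sum.inr i)) = w := by
            funext i; simp
          rw [this]; exact hw
        have h := hkey _ hmem
        unfold lorZmod at h
        simpa using h
      have hβ : (fun i => ((Y (Sum.inr i) : ZMod p))) ∈ (C : Set (Fin n → ZMod p)) := by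
        rw [← euclDual_euclDual C]
        intro v hv
        have hmem : (Sum.elim v 0 : Fin n ⊕ Fin n → ZMod p) ∈ CC := by
          refine ⟨?_, ?_⟩
          · have : (fun i => Sum.elim v (0 : Fin n → ZMod p) (Sum.inl i)) = v := by
              funext i; simp
            rw [this]; exact hv
          · have : (fun i => Sum.elim v (0 : Fin n → ZMod p) (Sum.inr i))
                = (0 : Fin n → ZMod p) := by
              funext i; simp
            rw [this]; exact C.zero_mem
        have h := hkey _ hmem
        unfold lorZmod at h
        simpa using h
      exact mem_constrA_iff.mpr ⟨Y, ⟨hα, hβ⟩, hxY⟩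
    · intro hx l hl
      obtain ⟨y, hy, rfl⟩ := mem_constrA_iff.mp hx
      obtain ⟨z, hz, rfl⟩ := mem_constrA_iff.mp hl
      obtain ⟨k, hk⟩ := hdvd y z hy hz
      refine ⟨k, ?_⟩
      rw [lorR_div_sqrt hp0, hk]
      push_cast
      field_simp
end
end

section
/- Let p be a prime and C ⊆ (ℤ/p)^n a linear code that is Euclidean self-dual, i.e. C = C^⊥ where C^⊥ := {v ∈ (ℤ/p)^n : Σ_{i=1}^n v_i c_i = 0 for all c ∈ C}. Then the Construction A lattice Λ(C × C) of the code C × C = {(α, β) : α, β ∈ C} ⊆ (ℤ/p)^{2n} is even self-dual with respect to the real Lorentzian inner product ⊙. -/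
noncomputable section
open scoped BigOperators

/-- Let `p` be a prime and `C ⊆ (ℤ/p)^n` a Euclidean self-dual linear code (`C = C^⊥`).
Then the Construction A lattice `Λ(C × C)` of the code `C × C ⊆ (ℤ/p)^{2n}` is even
self-dual with respect to the real Lorentzian inner product `⊙`. -/
theorem statement10 {n p : ℕ} (hn : 1 ≤ n) (hp : p.Prime)
    (C : Submodule (ZMod p) (Fin n → ZMod p))
    (hsd : (C : Set (Fin n → ZMod p)) = euclDual (C : Set (Fin n → ZMod p))) :
    let CC : Set (Fin n ⊕ Fin n → ZMod p) :=
      {c | (fun i => c (Sum.inl i)) ∈ C ∧ (fun i => c (Sum.inr i)) ∈ C}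
    (∀ l ∈ constrA p CC, ∃ k : ℤ, lorR l l = 2 * (k : ℝ)) ∧
    dualLor (constrA p CC) = constrA p CC := by

  intro CC
  haveI : Fact p.Prime := ⟨hp⟩
  have hp0 : (0:ℝ) < (p:ℝ) := by exact_mod_cast hp.pos
  have hspos : 0 < Real.sqrt p := Real.sqrt_pos.mpr hp0
  have hs0 : Real.sqrt p ≠ 0 := ne_of_gt hspos
  have hs : Real.sqrt p * Real.sqrt p = (p:ℝ) := Real.mul_self_sqrt hp0.le
  -- dot products of codewords vanish
  have hdot : ∀ α ∈ C, ∀ β ∈ C, ∑ i : Fin n, α i * β i = 0 := by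
    intro α hα β hβ
    have hα' : α ∈ euclDual (C : Set (Fin n → ZMod p)) := hsd ▸ hα
    exact hα' β hβ
  -- key divisibility
  have key : ∀ v w : Fin n ⊕ Fin n → ℤ,
      (fun i => ((v i : ZMod p))) ∈ CC → (fun i => ((w i : ZMod p))) ∈ CC →
      ∃ K : ℤ, ∑ i : Fin n, v (Sum.inl i) * w (Sum.inr i) = (p:ℤ) * K := by
    intro v w hv hw
    have h0 : ((∑ i : Fin n, v (Sum.inl i) * w (Sum.inr i) : ℤ) : ZMod p) = 0 := by
      push_cast
      exact hdot _ hv.1 _ hw.2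
    obtain ⟨K, hK⟩ := (ZMod.intCast_zmod_eq_zero_iff_dvd _ p).mp h0
    exact ⟨K, hK⟩
  -- representation of lattice vectors
  have hrep : ∀ l ∈ constrA p CC, ∃ v : Fin n ⊕ Fin n → ℤ,
      (fun i => ((v i : ZMod p))) ∈ CC ∧ l = fun i => (v i : ℝ) / Real.sqrt p := by
    rintro l ⟨c, hc, m, rfl⟩
    refine ⟨fun i => ((c i).val : ℤ) + p * m i, ?_, ?_⟩
    · have hcast : (fun i => ((((c i).val : ℤ) + p * m i : ℤ) : ZMod p)) = c := by
        funext i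
        push_cast [ZMod.natCast_val, ZMod.cast_id]
        simp
      rw [hcast]; exact hc
    · funext i
      simp only [liftR]
      push_cast
      ring
  -- computation of lorR on integer vectors divided by sqrt p
  have hcomp : ∀ v w : Fin n ⊕ Fin n → ℤ,
      lorR (fun i => (v i : ℝ) / Real.sqrt p) (fun i => (w i : ℝ) / Real.sqrt p)
        = ((∑ i : Fin n, v (Sum.inl i) * w (Sum.inr i) : ℤ) : ℝ) / p
          + ((∑ i : Fin n, v (Sum.inr i) * w (Sum.inl i) : ℤ) : ℝ) / p := by
    intro v w
    unfold lorR
    push_cast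
    rw [Finset.sum_div, Finset.sum_div, ← Finset.sum_add_distrib]
    refine Finset.sum_congr rfl fun i _ => ?_
    rw [div_mul_div_comm, div_mul_div_comm, hs, ← add_div]
  -- zero codeword in CC
  have h0CC : (0 : Fin n ⊕ Fin n → ZMod p) ∈ CC := ⟨C.zero_mem, C.zero_mem⟩
  -- evenness
  have heven : ∀ l ∈ constrA p CC, ∃ k : ℤ, lorR l l = 2 * (k : ℝ) := by
    intro l hl
    obtain ⟨v, hv, rfl⟩ := hrep l hl
    obtain ⟨K, hK⟩ := key v v hv hv
    refine ⟨K, ?_⟩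
    rw [hcomp v v]
    have h2 : ∑ i : Fin n, v (Sum.inr i) * v (Sum.inl i)
        = ∑ i : Fin n, v (Sum.inl i) * v (Sum.inr i) := by
      refine Finset.sum_congr rfl fun i _ => mul_comm _ _
    rw [h2, hK]
    push_cast
    field_simp
    ring
  refine ⟨heven, ?_⟩
  ext x
  constructor
  · intro hx
    -- Step 1: scaled coordinates are integers
    have hy : ∀ j : Fin n ⊕ Fin n, ∃ k : ℤ, x j * Real.sqrt p = (k : ℝ) := by
      intro j
      have hps : (p:ℝ) / Real.sqrt p = Real.sqrt p := by
        field_simp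
        rw [Real.sq_sqrt hp0.le]
      cases j with
      | inl j0 =>
        have hmem : (fun i => (liftR (0 : Fin n ⊕ Fin n → ZMod p) i
            + (p:ℝ) * ((if i = Sum.inr j0 then (1:ℤ) else 0 : ℤ) : ℝ)) / Real.sqrt p)
            ∈ constrA p CC :=
          ⟨0, h0CC, fun i' => if i' = Sum.inr j0 then (1:ℤ) else 0, rfl⟩
        obtain ⟨k, hk⟩ := hx _ hmem
        refine ⟨k, ?_⟩
        rw [← hk]
        have hl : (fun i => (liftR (0 : Fin n ⊕ Fin n → ZMod p) i
            + (p:ℝ) * ((if i = Sum.inr j0 then (1:ℤ) else 0 : ℤ) : ℝ)) / Real.sqrt p)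
            = fun i => if i = Sum.inr j0 then Real.sqrt p else 0 := by
          funext i
          by_cases h : i = Sum.inr j0 <;>
            simp [h, liftR, ZMod.val_zero, div_eq_iff hs0, hs]
        rw [hl]
        unfold lorR
        simp [Finset.sum_ite_eq', mul_ite, mul_zero]
      | inr j0 =>
        have hmem : (fun i => (liftR (0 : Fin n ⊕ Fin n → ZMod p) i
            + (p:ℝ) * ((if i = Sum.inl j0 then (1:ℤ) else 0 : ℤ) : ℝ)) / Real.sqrt p)
            ∈ constrA p CC :=
          ⟨0, h0CC, fun i' => if i' = Sum.inl j0 then (1:ℤ) else 0, rfl⟩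
        obtain ⟨k, hk⟩ := hx _ hmem
        refine ⟨k, ?_⟩
        rw [← hk]
        have hl : (fun i => (liftR (0 : Fin n ⊕ Fin n → ZMod p) i
            + (p:ℝ) * ((if i = Sum.inl j0 then (1:ℤ) else 0 : ℤ) : ℝ)) / Real.sqrt p)
            = fun i => if i = Sum.inl j0 then Real.sqrt p else 0 := by
          funext i
          by_cases h : i = Sum.inl j0 <;>
            simp [h, liftR, ZMod.val_zero, div_eq_iff hs0, hs]
        rw [hl]
        unfold lorR
        simp [Finset.sum_ite_eq', mul_ite, mul_zero]
    choose y hy using hy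
    have hxy : x = fun i => (y i : ℝ) / Real.sqrt p := by
      funext i
      rw [eq_div_iff hs0]
      exact hy i
    -- Step 2: reductions of y lie in C
    have hdual : ∀ c ∈ CC, ((∑ i : Fin n,
        (y (Sum.inl i) * ((c (Sum.inr i)).val : ℤ)
          + y (Sum.inr i) * ((c (Sum.inl i)).val : ℤ)) : ℤ) : ZMod p) = 0 := by
      intro c hc
      obtain ⟨k, hk⟩ := hx _ ⟨c, hc, 0, rfl⟩
      rw [hxy] at hk
      have hval : ∀ i : Fin n ⊕ Fin n,
          liftR c i + (p:ℝ) * ((0 : Fin n ⊕ Fin n → ℤ) i : ℤ) = ((((c i).val : ℤ)) : ℝ) := by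
        intro i; simp [liftR]
      have hk2 : lorR (fun i => (y i : ℝ) / Real.sqrt p)
          (fun i => ((((c i).val : ℤ)) : ℝ) / Real.sqrt p) = (k : ℝ) := by
        rw [← hk]
        congr 1
        funext i
        rw [hval i]
      rw [hcomp, ← add_div] at hk2
      have hS := (div_eq_iff (ne_of_gt hp0)).mp hk2
      have hSint : (∑ i : Fin n, y (Sum.inl i) * ((c (Sum.inr i)).val : ℤ))
          + (∑ i : Fin n, y (Sum.inr i) * ((c (Sum.inl i)).val : ℤ)) = k * p := by
        exact_mod_cast hS
      rw [Finset.sum_add_distrib, hSint]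
      push_cast
      simp
    have hyR : (fun i => ((y (Sum.inr i) : ZMod p))) ∈ C := by
      rw [← SetLike.mem_coe, hsd]
      intro α hα
      have := hdual (Sum.elim α 0) ⟨hα, C.zero_mem⟩
      push_cast [ZMod.natCast_val, ZMod.cast_id] at this
      simpa using this
    have hyL : (fun i => ((y (Sum.inl i) : ZMod p))) ∈ C := by
      rw [← SetLike.mem_coe, hsd]
      intro α hα
      have := hdual (Sum.elim 0 α) ⟨C.zero_mem, hα⟩
      push_cast [ZMod.natCast_val, ZMod.cast_id] at this
      simpa using this
    -- Step 3: build the lattice representation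
    refine ⟨fun i => ((y i : ZMod p)), ⟨hyL, hyR⟩,
      fun i => (y i - (((y i : ZMod p)).val : ℤ)) / p, ?_⟩
    have hdvd : ∀ i : Fin n ⊕ Fin n, (p:ℤ) ∣ (y i - (((y i : ZMod p)).val : ℤ)) := by
      intro i
      have : ((y i - (((y i : ZMod p)).val : ℤ) : ℤ) : ZMod p) = 0 := by
        push_cast [ZMod.natCast_val, ZMod.cast_id]
        ring
      exact (ZMod.intCast_zmod_eq_zero_iff_dvd _ p).mp this
    rw [hxy]
    funext i
    obtain ⟨t, ht⟩ := hdvd i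
    have hq : (y i - (((y i : ZMod p)).val : ℤ)) / (p:ℤ) = t := by
      rw [ht]; exact Int.mul_ediv_cancel_left _ (by exact_mod_cast hp.pos.ne')
    show ((y i : ℤ) : ℝ) / Real.sqrt p
        = (liftR (fun i => ((y i : ZMod p))) i
          + (p:ℝ) * (((y i - (((y i : ZMod p)).val : ℤ)) / (p:ℤ) : ℤ) : ℝ)) / Real.sqrt p
    rw [hq]
    simp only [liftR]
    have hyi : (y i : ℤ) = (((y i : ZMod p)).val : ℤ) + p * t := by omega
    conv_lhs => rw [hyi]
    push_cast
    ring
  · intro hl l' hl'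
    obtain ⟨v, hv, rfl⟩ := hrep x hl
    obtain ⟨w, hw, rfl⟩ := hrep l' hl'
    obtain ⟨K1, hK1⟩ := key v w hv hw
    obtain ⟨K2, hK2⟩ := key w v hw hv
    refine ⟨K1 + K2, ?_⟩
    rw [hcomp, hK1]
    have h2 : ∑ i : Fin n, v (Sum.inr i) * w (Sum.inl i)
        = ∑ i : Fin n, w (Sum.inl i) * v (Sum.inr i) := by
      refine Finset.sum_congr rfl fun i _ => mul_comm _ _
    rw [h2, hK2]
    push_cast
    field_simp
end
end

section
/- Let 𝒞 ⊆ (ℤ/2)^{2n} be a linear code that is doubly-even and self-dual with respect to the Lorentzian inner product η. Then 𝒞 is F₄-even if and only if the all-ones vector 1_{2n} belongs to 𝒞. (Here 𝒞 is called F₄-even if every codeword c = (α, β) ∈ 𝒞 satisfies α̃·α̃ + β̃·β̃ − α̃·β̃ ∈ 2ℤ, where α̃, β̃ ∈ {0,1}^n are the integer lifts and · is the Euclidean dot product on ℤ^n.) -/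
noncomputable section
open scoped BigOperators

/-- A binary code `𝒞 ⊆ (ℤ/2)^{2n}` is F₄-even if every codeword `c = (α, β)` satisfies
`α̃·α̃ + β̃·β̃ − α̃·β̃ ∈ 2ℤ`, where `α̃, β̃ ∈ {0,1}^n` are the integer lifts. -/
def isF4Even {n : ℕ} (C : Set (Fin n ⊕ Fin n → ZMod 2)) : Prop :=
  ∀ c ∈ C, (2 : ℤ) ∣ ∑ i : Fin n,
    (((c (Sum.inl i)).val : ℤ) * ((c (Sum.inl i)).val : ℤ)
      + ((c (Sum.inr i)).val : ℤ) * ((c (Sum.inr i)).val : ℤ)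
      - ((c (Sum.inl i)).val : ℤ) * ((c (Sum.inr i)).val : ℤ))

/-- A binary code `𝒞 ⊆ (ℤ/2)^{2n}` is doubly-even with respect to `η` if the integer
lift of every codeword satisfies `c̃ ⊙ c̃ ∈ 4ℤ`. -/
def isDoublyEven {n : ℕ} (C : Set (Fin n ⊕ Fin n → ZMod 2)) : Prop :=
  ∀ c ∈ C, (4 : ℤ) ∣ ∑ i : Fin n,
    (((c (Sum.inl i)).val : ℤ) * ((c (Sum.inr i)).val : ℤ)
      + ((c (Sum.inr i)).val : ℤ) * ((c (Sum.inl i)).val : ℤ))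

lemma valsq (v : ZMod 2) : ((v.val : ℤ)) * ((v.val : ℤ)) = (v.val : ℤ) := by
  revert v; decide

lemma castval (v : ZMod 2) : (((v.val : ℤ) : ZMod 2)) = v := by
  push_cast
  simp [ZMod.natCast_val, ZMod.cast_id]

/-- Let `𝒞 ⊆ (ℤ/2)^{2n}` be a linear code that is doubly-even and self-dual with respect
to the Lorentzian inner product `η`. Then `𝒞` is F₄-even if and only if the all-ones
vector `1_{2n}` belongs to `𝒞`. -/
theorem statement11 {n : ℕ} (hn : 1 ≤ n)
    (C : Submodule (ZMod 2) (Fin n ⊕ Fin n → ZMod 2))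
    (hde : isDoublyEven (C : Set (Fin n ⊕ Fin n → ZMod 2)))
    (hsd : (C : Set (Fin n ⊕ Fin n → ZMod 2)) = {v | ∀ c ∈ C, lorZmod v c = 0}) :
    isF4Even (C : Set (Fin n ⊕ Fin n → ZMod 2)) ↔ (fun _ => (1 : ZMod 2)) ∈ C := by
  -- abbreviations
  have hAB : ∀ c ∈ C, (2 : ℤ) ∣
      ∑ i : Fin n, ((c (Sum.inl i)).val : ℤ) * ((c (Sum.inr i)).val : ℤ) := by
    intro c hc
    have h4 := hde c hc
    have heq : ∑ i : Fin n, (((c (Sum.inl i)).val : ℤ) * ((c (Sum.inr i)).val : ℤ)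
        + ((c (Sum.inr i)).val : ℤ) * ((c (Sum.inl i)).val : ℤ))
        = 2 * ∑ i : Fin n, ((c (Sum.inl i)).val : ℤ) * ((c (Sum.inr i)).val : ℤ) := by
      rw [Finset.mul_sum]
      exact Finset.sum_congr rfl (fun i _ => by ring)
    rw [heq] at h4
    obtain ⟨k, hk⟩ := h4
    exact ⟨k, by linarith⟩
  have hS : ∀ c : Fin n ⊕ Fin n → ZMod 2,
      (∑ i : Fin n, (((c (Sum.inl i)).val : ℤ) * ((c (Sum.inl i)).val : ℤ)
        + ((c (Sum.inr i)).val : ℤ) * ((c (Sum.inr i)).val : ℤ)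
        - ((c (Sum.inl i)).val : ℤ) * ((c (Sum.inr i)).val : ℤ)))
      = (∑ i : Fin n, (((c (Sum.inl i)).val : ℤ) + ((c (Sum.inr i)).val : ℤ)))
        - ∑ i : Fin n, ((c (Sum.inl i)).val : ℤ) * ((c (Sum.inr i)).val : ℤ) := by
    intro c
    rw [← Finset.sum_sub_distrib]
    refine Finset.sum_congr rfl (fun i _ => ?_)
    rw [valsq, valsq]
  have hlor : ∀ c : Fin n ⊕ Fin n → ZMod 2,
      lorZmod (fun _ => (1 : ZMod 2)) c
        = (((∑ i : Fin n, (((c (Sum.inl i)).val : ℤ) + ((c (Sum.inr i)).val : ℤ))) : ℤ) : ZMod 2) := by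
    intro c
    unfold lorZmod
    push_cast
    refine Finset.sum_congr rfl (fun i _ => ?_)
    simp [ZMod.natCast_val, ZMod.cast_id]
    ring
  constructor
  · intro hf
    rw [← SetLike.mem_coe, hsd]
    intro c hc
    have h1 := hf c hc
    rw [hS c] at h1
    obtain ⟨k, hk⟩ := h1
    obtain ⟨m, hm⟩ := hAB c hc
    rw [hlor c, ZMod.intCast_zmod_eq_zero_iff_dvd]
    exact ⟨k + m, by push_cast; linarith⟩
  · intro h1
    intro c hc
    have hmem : c ∈ {v | ∀ c' ∈ C, lorZmod v c' = 0} := by rw [← hsd]; exact hc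
    have hl := hmem (fun _ => (1 : ZMod 2)) h1
    have hl' : lorZmod (fun _ => (1 : ZMod 2)) c = 0 := by
      rw [← hl]
      unfold lorZmod
      refine Finset.sum_congr rfl (fun i _ => by ring)
    rw [hlor c, ZMod.intCast_zmod_eq_zero_iff_dvd] at hl'
    obtain ⟨k, hk⟩ := hl'
    obtain ⟨m, hm⟩ := hAB c hc
    rw [hS c]
    exact ⟨k - m, by push_cast at hk ⊢; linarith⟩
end
end
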